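/- arXiv:2207.14794 — 11 statements merged into one kernel-verified Lean document; each statement's English description precedes it below -/
import Mathlib

section
/- Let Q = v_1, e_1, ..., e_{s-1}, v_s be a graph path on s vertices. Let A and B be nonempty subsets of the vertices of Q such that A is an independent set in Q, B \ A is nonempty, and for every v_i in A and v_j in B \ A we have |i - j| >= q where q >= 2. Then s >= 2|A| + |B \ A| + q - 2. -/
private lemma aux_stmt_0 (s q : ℕ) (hq : 2 ≤ q) (A C : Finset ℕ)
    (hA : A ⊆ Finset.Icc 1 s) (hC : C ⊆ Finset.Icc 1 s)
    (hAC : Disjoint A C)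
    (hind : ∀ i ∈ A, i + 1 ∉ A)
    (hdist : ∀ i ∈ A, ∀ j ∈ C, q ≤ Nat.dist i j)
    (hlt : ∃ a ∈ A, ∃ c ∈ C, a < c) :
    2 * A.card + C.card + q ≤ s + 2 := by
  classical
  obtain ⟨a, haA, c, hcC, hac⟩ := hlt
  have hAbd : ∀ x ∈ A, 1 ≤ x ∧ x ≤ s := by
    intro x hx; simpa using Finset.mem_Icc.mp (hA hx)
  have hCbd : ∀ x ∈ C, 1 ≤ x ∧ x ≤ s := by
    intro x hx; simpa using Finset.mem_Icc.mp (hC hx)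
  have haq : ∀ a' ∈ A, ∀ c' ∈ C, a' + q ≤ c' ∨ c' + q ≤ a' := by
    intro a' ha' c' hc'
    have h := hdist a' ha' c' hc'
    simp only [Nat.dist] at h
    omega
  set F : Finset ℕ := C.filter (fun x => a < x) with hF
  have hFne : F.Nonempty := ⟨c, by simp [hF, Finset.mem_filter, hcC, hac]⟩
  set cs := F.min' hFne with hcs
  have hcsF : cs ∈ F := F.min'_mem hFne
  have hcsC : cs ∈ C := (Finset.mem_filter.mp hcsF).1
  have hacs : a < cs := (Finset.mem_filter.mp hcsF).2
  have hmin : ∀ x ∈ C, a < x → cs ≤ x := by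
    intro x hx hax
    exact F.min'_le x (Finset.mem_filter.mpr ⟨hx, hax⟩)
  have hqa : a + q ≤ cs := by
    rcases haq a haA cs hcsC with h | h
    · exact h
    · omega
  have ha1 : 1 ≤ a := (hAbd a haA).1
  have hcss : cs ≤ s := (hCbd cs hcsC).2
  set D : Finset ℕ := (A.erase 1).image (fun x => x - 1) with hD
  set G : Finset ℕ := Finset.Icc (cs - q + 1) (cs - 1) with hG
  have hDmem : ∀ d ∈ D, ∃ x ∈ A, 2 ≤ x ∧ x ≤ s ∧ d = x - 1 := by
    intro d hd
    obtain ⟨x, hx, hxd⟩ := Finset.mem_image.mp hd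
    have hx1 : x ≠ 1 := (Finset.mem_erase.mp hx).1
    have hxA : x ∈ A := (Finset.mem_erase.mp hx).2
    have := hAbd x hxA
    exact ⟨x, hxA, by omega, by omega, by omega⟩
  have hGmem : ∀ g ∈ G, cs - q + 1 ≤ g ∧ g ≤ cs - 1 := by
    intro g hg; exact Finset.mem_Icc.mp hg
  -- disjointness
  have dAD : Disjoint A D := by
    rw [Finset.disjoint_left]
    intro x hxA hxD
    obtain ⟨y, hyA, hy2, hys, hxy⟩ := hDmem x hxD
    have : x + 1 = y := by omega
    exact hind x hxA (this ▸ hyA)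
  have dAG : Disjoint A G := by
    rw [Finset.disjoint_left]
    intro x hxA hxG
    have := hGmem x hxG
    rcases haq x hxA cs hcsC with h | h <;> omega
  have dDC : Disjoint D C := by
    rw [Finset.disjoint_left]
    intro x hxD hxC
    obtain ⟨y, hyA, hy2, hys, hxy⟩ := hDmem x hxD
    rcases haq y hyA x hxC with h | h <;> omega
  have dDG : Disjoint D G := by
    rw [Finset.disjoint_left]
    intro x hxD hxG
    obtain ⟨y, hyA, hy2, hys, hxy⟩ := hDmem x hxD
    have := hGmem x hxG
    rcases haq y hyA cs hcsC with h | h <;> omega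
  have dCG : Disjoint C G := by
    rw [Finset.disjoint_left]
    intro x hxC hxG
    have hg := hGmem x hxG
    have hax : a < x := by omega
    have := hmin x hxC hax
    omega
  have hsub : A ∪ D ∪ C ∪ G ⊆ Finset.Icc 1 s := by
    intro x hx
    rcases Finset.mem_union.mp hx with hx | hxG
    · rcases Finset.mem_union.mp hx with hx | hxC
      · rcases Finset.mem_union.mp hx with hxA | hxD
        · exact hA hxA
        · obtain ⟨y, hyA, hy2, hys, hxy⟩ := hDmem x hxD
          exact Finset.mem_Icc.mpr (by omega)
      · exact hC hxC
    · have := hGmem x hxG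
      exact Finset.mem_Icc.mpr (by omega)
  have hcard : (A ∪ D ∪ C ∪ G).card = A.card + D.card + C.card + G.card := by
    rw [Finset.card_union_of_disjoint, Finset.card_union_of_disjoint,
      Finset.card_union_of_disjoint dAD]
    · rw [Finset.disjoint_union_left]; exact ⟨(Finset.disjoint_left.mpr
        (fun x hx hx' => Finset.disjoint_left.mp hAC hx hx')), dDC⟩
    · rw [Finset.disjoint_union_left, Finset.disjoint_union_left]
      exact ⟨⟨dAG, dDG⟩, dCG⟩
  have hle : (A ∪ D ∪ C ∪ G).card ≤ s := by
    have := Finset.card_le_card hsub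
    simpa [Nat.card_Icc] using this
  have hGcard : G.card = q - 1 := by
    rw [hG, Nat.card_Icc]; omega
  have hDcard : A.card - 1 ≤ D.card := by
    have hinj : Set.InjOn (fun x => x - 1) (A.erase 1) := by
      intro x hx y hy hxy
      have hx' := Finset.mem_erase.mp hx
      have hy' := Finset.mem_erase.mp hy
      have := hAbd x hx'.2
      have := hAbd y hy'.2
      simp only at hxy
      omega
    rw [hD, Finset.card_image_of_injOn hinj]
    exact Finset.pred_card_le_card_erase
  have hApos : 1 ≤ A.card := Finset.card_pos.mpr ⟨a, haA⟩
  omega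

/-- Lemma on graph paths: vertices are identified with their positions 1,...,s along
the path; an independent set contains no two consecutive positions. -/
theorem stmt_0 (s q : ℕ) (hq : 2 ≤ q) (A B : Finset ℕ)
    (hA : A ⊆ Finset.Icc 1 s) (hB : B ⊆ Finset.Icc 1 s)
    (hAne : A.Nonempty) (hBne : B.Nonempty) (hBA : (B \ A).Nonempty)
    (hind : ∀ i ∈ A, i + 1 ∉ A)
    (hdist : ∀ i ∈ A, ∀ j ∈ B \ A, q ≤ Nat.dist i j) :
    2 * A.card + (B \ A).card + q ≤ s + 2 := by
  classical
  set C := B \ A with hCdef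
  have hC : C ⊆ Finset.Icc 1 s := fun x hx => hB (Finset.mem_sdiff.mp hx).1
  have hAC : Disjoint A C := by
    rw [Finset.disjoint_left]
    intro x hxA hxC
    exact (Finset.mem_sdiff.mp hxC).2 hxA
  have hAbd : ∀ x ∈ A, 1 ≤ x ∧ x ≤ s := by
    intro x hx; simpa using Finset.mem_Icc.mp (hA hx)
  have hCbd : ∀ x ∈ C, 1 ≤ x ∧ x ≤ s := by
    intro x hx; simpa using Finset.mem_Icc.mp (hC hx)
  by_cases hlt : ∃ a ∈ A, ∃ c ∈ C, a < c
  · exact aux_stmt_0 s q hq A C hA hC hAC hind hdist hlt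
  · -- all elements of C are below all elements of A; reflect by x ↦ s + 1 - x
    push_neg at hlt
    set r : ℕ → ℕ := fun x => s + 1 - x with hr
    set A' := A.image r with hA'
    set C' := C.image r with hC'
    have hA'sub : A' ⊆ Finset.Icc 1 s := by
      intro x hx
      obtain ⟨y, hy, hyx⟩ := Finset.mem_image.mp hx
      have := hAbd y hy
      exact Finset.mem_Icc.mpr (by simp only [hr] at hyx; omega)
    have hC'sub : C' ⊆ Finset.Icc 1 s := by
      intro x hx
      obtain ⟨y, hy, hyx⟩ := Finset.mem_image.mp hx
      have := hCbd y hy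
      exact Finset.mem_Icc.mpr (by simp only [hr] at hyx; omega)
    have hA'C' : Disjoint A' C' := by
      rw [Finset.disjoint_left]
      intro x hxA hxC
      obtain ⟨y, hy, hyx⟩ := Finset.mem_image.mp hxA
      obtain ⟨z, hz, hzx⟩ := Finset.mem_image.mp hxC
      have h1 := hAbd y hy
      have h2 := hCbd z hz
      have : y = z := by simp only [hr] at hyx hzx; omega
      exact Finset.disjoint_left.mp hAC hy (this ▸ hz)
    have hind' : ∀ i ∈ A', i + 1 ∉ A' := by
      intro i hi hi1
      obtain ⟨y, hy, hyx⟩ := Finset.mem_image.mp hi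
      obtain ⟨z, hz, hzx⟩ := Finset.mem_image.mp hi1
      have h1 := hAbd y hy
      have h2 := hAbd z hz
      have : z + 1 = y := by simp only [hr] at hyx hzx; omega
      exact hind z hz (this ▸ hy)
    have hdist' : ∀ i ∈ A', ∀ j ∈ C', q ≤ Nat.dist i j := by
      intro i hi j hj
      obtain ⟨y, hy, hyx⟩ := Finset.mem_image.mp hi
      obtain ⟨z, hz, hzx⟩ := Finset.mem_image.mp hj
      have h1 := hAbd y hy
      have h2 := hCbd z hz
      have h := hdist y hy z hz
      simp only [Nat.dist] at h ⊢
      simp only [hr] at hyx hzx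
      omega
    have hlt' : ∃ a ∈ A', ∃ c ∈ C', a < c := by
      obtain ⟨a, ha⟩ := hAne
      obtain ⟨c, hc⟩ := hBA
      have hca : c < a := by
        have h1 := hAbd a ha
        have h2 := hCbd c hc
        have := hlt a ha c hc
        have := hdist a ha c hc
        simp only [Nat.dist] at this
        omega
      refine ⟨r a, Finset.mem_image_of_mem r ha, r c, Finset.mem_image_of_mem r hc, ?_⟩
      have h1 := hAbd a ha
      have h2 := hCbd c hc
      simp only [hr]
      omega
    have hrinjA : Set.InjOn r A := by
      intro x hx y hy hxy
      have := hAbd x hx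
      have := hAbd y hy
      simp only [hr] at hxy
      omega
    have hrinjC : Set.InjOn r C := by
      intro x hx y hy hxy
      have := hCbd x hx
      have := hCbd y hy
      simp only [hr] at hxy
      omega
    have hcards : A'.card = A.card ∧ C'.card = C.card :=
      ⟨Finset.card_image_of_injOn hrinjA, Finset.card_image_of_injOn hrinjC⟩
    have := aux_stmt_0 s q hq A' C' hA'sub hC'sub hA'C' hind' hdist' hlt'
    omega
end

section
/- Let q >= 2 and s > a >= 1. Let Q = v_1, e_1, ..., e_{s-1}, v_s be a graph path, and let I be a nonempty independent subset of {v_1, ..., v_s}. If A' is a set of a edges of Q such that the distance in Q from any edge in A' to any vertex in I is at least q, then |I| <= floor((s - a - q + 1)/2). -/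
/-- Lemma on graph paths: vertices are positions 1,...,s, edges are positions
1,...,s-1 (edge i joins vertices i and i+1).  The distance from edge i to a
vertex j is min (|i-j|, |i+1-j|).  The conclusion `2|I| ≤ s - a - q + 1` is
equivalent to `|I| ≤ ⌊(s - a - q + 1)/2⌋`. -/
theorem stmt_2 (s a q : ℕ) (hq : 2 ≤ q) (ha : 1 ≤ a) (has : a < s)
    (I A' : Finset ℕ)
    (hI : I ⊆ Finset.Icc 1 s) (hIne : I.Nonempty)
    (hind : ∀ i ∈ I, i + 1 ∉ I)
    (hA' : A' ⊆ Finset.Icc 1 (s - 1)) (hcard : A'.card = a)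
    (hdist : ∀ i ∈ A', ∀ j ∈ I, q ≤ min (Nat.dist i j) (Nat.dist (i + 1) j)) :
    (2 * I.card : ℤ) ≤ (s : ℤ) - a - q + 1 := by
  classical
  have hkey : ∀ i ∈ A', ∀ j ∈ I, j + q ≤ i ∨ i + q + 1 ≤ j := by
    intro i hi j hj
    have h := hdist i hi j hj
    have h1 : q ≤ Nat.dist i j := le_trans h (min_le_left _ _)
    have h2 : q ≤ Nat.dist (i + 1) j := le_trans h (min_le_right _ _)
    simp [Nat.dist] at h1 h2
    omega
  have hAne : A'.Nonempty := Finset.card_pos.mp (by omega)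
  set i0 := A'.max' hAne with hi0def
  have hi0A : i0 ∈ A' := A'.max'_mem hAne
  have hi0le : ∀ i ∈ A', i ≤ i0 := fun i hi => A'.le_max' i hi
  have hinj : Function.Injective (fun x : ℕ => x + 1) := add_left_injective 1
  have hdisjI : ∀ X : Finset ℕ, X ⊆ I → Disjoint X (X.image (· + 1)) := by
    intro X hX
    rw [Finset.disjoint_left]
    intro x hx hx'
    obtain ⟨y, hy, rfl⟩ := Finset.mem_image.mp hx'
    exact hind y (hX hy) (hX hx)
  have hs2 : 2 ≤ s := by omega
  by_cases hc : ∃ j ∈ I, i0 < j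
  · -- Case 1: some vertex to the right of the largest edge
    set R := I.filter (fun j => i0 < j) with hRdef
    set L := I.filter (fun j => ¬ i0 < j) with hLdef
    have hLR : L.card + R.card = I.card := by
      rw [hLdef, hRdef, add_comm]
      exact Finset.card_filter_add_card_filter_not _
    have hRI : R ⊆ I := Finset.filter_subset _ _
    have hLI : L ⊆ I := Finset.filter_subset _ _
    have hRne : R.Nonempty := by
      obtain ⟨j, hj, hj'⟩ := hc
      exact ⟨j, by rw [hRdef, Finset.mem_filter]; exact ⟨hj, hj'⟩⟩
    -- bound the right part
    have hRsub : R ∪ R.image (· + 1) ⊆ Finset.Icc (i0 + q + 1) (s + 1) := by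
      intro x hx
      rw [Finset.mem_union] at hx
      rcases hx with hx | hx
      · rw [hRdef, Finset.mem_filter] at hx
        rcases hkey i0 hi0A x hx.1 with h | h
        · omega
        · have h2 := hI hx.1
          simp only [Finset.mem_Icc] at h2 ⊢
          omega
      · obtain ⟨y, hy, rfl⟩ := Finset.mem_image.mp hx
        rw [hRdef, Finset.mem_filter] at hy
        rcases hkey i0 hi0A y hy.1 with h | h
        · omega
        · have h2 := hI hy.1
          simp only [Finset.mem_Icc] at h2 ⊢
          omega
    have hRcard : 2 * R.card ≤ s + 1 + 1 - (i0 + q + 1) := by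
      have h1 := Finset.card_le_card hRsub
      rw [Finset.card_union_of_disjoint (hdisjI R hRI),
        Finset.card_image_of_injective _ hinj, Nat.card_Icc] at h1
      omega
    -- bound the left part
    have hLsub : (L ∪ L.image (· + 1)) ∪ A' ⊆ Finset.Icc 1 i0 := by
      intro x hx
      simp only [Finset.mem_union] at hx
      rcases hx with (hx | hx) | hx
      · rw [hLdef, Finset.mem_filter] at hx
        rcases hkey i0 hi0A x hx.1 with h | h
        · have h2 := hI hx.1
          simp only [Finset.mem_Icc] at h2 ⊢
          omega
        · omega
      · obtain ⟨y, hy, rfl⟩ := Finset.mem_image.mp hx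
        rw [hLdef, Finset.mem_filter] at hy
        rcases hkey i0 hi0A y hy.1 with h | h
        · have h2 := hI hy.1
          simp only [Finset.mem_Icc] at h2 ⊢
          omega
        · omega
      · have h2 := hA' hx
        simp only [Finset.mem_Icc] at h2 ⊢
        have := hi0le x hx
        omega
    have hLdisj : Disjoint (L ∪ L.image (· + 1)) A' := by
      rw [Finset.disjoint_right]
      intro i hi hmem
      simp only [Finset.mem_union] at hmem
      rcases hmem with hm | hm
      · have hiI : i ∈ I := hLI hm
        rcases hkey i hi i hiI with h | h <;> omega
      · obtain ⟨y, hy, hyeq⟩ := Finset.mem_image.mp hm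
        have hyI : y ∈ I := hLI hy
        rcases hkey i hi y hyI with h | h <;> omega
    have hLcard : 2 * L.card + a ≤ i0 := by
      have h1 := Finset.card_le_card hLsub
      rw [Finset.card_union_of_disjoint hLdisj,
        Finset.card_union_of_disjoint (hdisjI L hLI),
        Finset.card_image_of_injective _ hinj, hcard, Nat.card_Icc] at h1
      omega
    have hRpos : 1 ≤ R.card := Finset.card_pos.mpr hRne
    omega
  · -- Case 2: all vertices are to the left of the largest edge
    push_neg at hc
    set jk := I.max' hIne with hjkdef
    have hjkI : jk ∈ I := I.max'_mem hIne
    have hjkle : ∀ j ∈ I, j ≤ jk := fun j hj => I.le_max' j hj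
    have hjki0 : jk + q ≤ i0 := by
      rcases hkey i0 hi0A jk hjkI with h | h
      · exact h
      · have := hc jk hjkI; omega
    set R' := A'.filter (fun i => jk < i) with hRdef
    set L' := A'.filter (fun i => ¬ jk < i) with hLdef
    have hLR : L'.card + R'.card = a := by
      rw [hLdef, hRdef, add_comm, ← hcard]
      exact Finset.card_filter_add_card_filter_not _
    have hR'ne : i0 ∈ R' := by
      rw [hRdef, Finset.mem_filter]
      exact ⟨hi0A, by omega⟩
    have hR'pos : 1 ≤ R'.card := Finset.card_pos.mpr ⟨i0, hR'ne⟩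
    have hRsub : R' ⊆ Finset.Icc (jk + q) (s - 1) := by
      intro i hi
      rw [hRdef, Finset.mem_filter] at hi
      have h2 := hA' hi.1
      simp only [Finset.mem_Icc] at h2 ⊢
      rcases hkey i hi.1 jk hjkI with h | h
      · omega
      · omega
    have hRcard : R'.card ≤ s - 1 + 1 - (jk + q) := by
      have h1 := Finset.card_le_card hRsub
      rwa [Nat.card_Icc] at h1
    have hLsub : (I ∪ I.image (· + 1)) ∪ L' ⊆ Finset.Icc 1 (jk + 1) := by
      intro x hx
      simp only [Finset.mem_union] at hx
      rcases hx with (hx | hx) | hx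
      · have h2 := hI hx
        have := hjkle x hx
        simp only [Finset.mem_Icc] at h2 ⊢
        omega
      · obtain ⟨y, hy, rfl⟩ := Finset.mem_image.mp hx
        have h2 := hI hy
        have := hjkle y hy
        simp only [Finset.mem_Icc] at h2 ⊢
        omega
      · rw [hLdef, Finset.mem_filter] at hx
        have h2 := hA' hx.1
        simp only [Finset.mem_Icc] at h2 ⊢
        omega
    have hLdisj : Disjoint (I ∪ I.image (· + 1)) L' := by
      rw [Finset.disjoint_right]
      intro i hi hmem
      have hiA : i ∈ A' := (Finset.filter_subset _ _) hi
      simp only [Finset.mem_union] at hmem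
      rcases hmem with hm | hm
      · rcases hkey i hiA i hm with h | h <;> omega
      · obtain ⟨y, hy, hyeq⟩ := Finset.mem_image.mp hm
        rcases hkey i hiA y hy with h | h <;> omega
    have hLcard : 2 * I.card + L'.card ≤ jk + 1 := by
      have h1 := Finset.card_le_card hLsub
      rw [Finset.card_union_of_disjoint hLdisj,
        Finset.card_union_of_disjoint (hdisjI I (by rfl)),
        Finset.card_image_of_injective _ hinj, Nat.card_Icc] at h1
      omega
    omega
end

section
/- Let Q = v_1, e_1, ..., e_{s-1}, v_s be a graph path. Let A and B be nonempty subsets of the vertices of Q with A != B, such that for each v_i in A and v_j in B either i = j or |i - j| >= q where q >= 2. Then s >= |A| + |B| + q - 2, with equality only if A is a subset of B or B is a subset of A. -/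
open Finset

private lemma dist_ge {q a b : ℕ} (h : q ≤ Nat.dist a b) (hle : a ≤ b) : a + q ≤ b := by
  rw [Nat.dist_eq_sub_of_le hle] at h
  omega

private lemma dist_ge' {q a b : ℕ} (h : q ≤ Nat.dist b a) (hle : a ≤ b) : a + q ≤ b :=
  dist_ge (by rwa [Nat.dist_comm]) hle

/-- A set of pairwise `q`-separated numbers in `Icc 1 N` forces `N` to be large. -/
private lemma sep_bound (q : ℕ) : ∀ n : ℕ, ∀ (B : Finset ℕ) (N : ℕ), B.card ≤ n →
    B.Nonempty → B ⊆ Finset.Icc 1 N →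
    (∀ a ∈ B, ∀ b ∈ B, a ≠ b → q ≤ Nat.dist a b) →
    (B.card - 1) * q + 1 ≤ N := by
  intro n
  induction n with
  | zero =>
    intro B N hc hne _ _
    have := hne.card_pos
    omega
  | succ n ih =>
    intro B N hc hne hsub hsep
    have hMmem : B.max' hne ∈ B := B.max'_mem hne
    set M := B.max' hne with hMdef
    have hMN : M ≤ N := (Finset.mem_Icc.mp (hsub hMmem)).2
    have hM1 : 1 ≤ M := (Finset.mem_Icc.mp (hsub hMmem)).1
    by_cases hB' : (B.erase M).Nonempty
    · have hsub' : B.erase M ⊆ Finset.Icc 1 (M - q) := by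
        intro b hb
        have hbB := Finset.mem_of_mem_erase hb
        have hbne := Finset.ne_of_mem_erase hb
        have h1 := (Finset.mem_Icc.mp (hsub hbB)).1
        have hle : b ≤ M := Finset.le_max' _ _ hbB
        have hd := dist_ge (hsep b hbB M hMmem hbne) hle
        rw [Finset.mem_Icc]; omega
      have hcard' : (B.erase M).card ≤ n := by
        have h1 := Finset.card_erase_of_mem hMmem
        have h2 := hne.card_pos
        omega
      have hd := ih (B.erase M) (M - q) hcard' hB' hsub'
        (fun a ha b hb hab => hsep a (Finset.mem_of_mem_erase ha) b
          (Finset.mem_of_mem_erase hb) hab)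
      have hce : (B.erase M).card = B.card - 1 := Finset.card_erase_of_mem hMmem
      have hc1 : 1 ≤ (B.erase M).card := hB'.card_pos
      obtain ⟨b, hb⟩ := hB'
      have hbIcc := Finset.mem_Icc.mp (hsub' hb)
      have hmul : (B.card - 1) * q = (B.card - 1 - 1) * q + q := by
        obtain ⟨c, hc2⟩ : ∃ c, B.card - 1 = c + 1 := ⟨B.card - 2, by omega⟩
        rw [hc2]
        simp [Nat.succ_mul]
      rw [hce] at hd
      omega
    · have hBe : B.erase M = ∅ := Finset.not_nonempty_iff_eq_empty.mp hB'
      have hc1 : B.card = 1 := by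
        have h1 := Finset.card_erase_of_mem hMmem
        rw [hBe] at h1
        simp at h1
        have := hne.card_pos
        omega
      rw [hc1]
      simpa using hM1.trans hMN

/-- The case of the inductive step where the maximum `M` of `A ∪ B` lies in `A` but not `B`. -/
private lemma case2 (q : ℕ) (hq : 2 ≤ q) (n : ℕ)
    (ih : ∀ A B : Finset ℕ, ∀ s : ℕ, (A ∪ B).card ≤ n → A ⊆ Finset.Icc 1 s →
      B ⊆ Finset.Icc 1 s → A.Nonempty → B.Nonempty → A ≠ B →
      (∀ i ∈ A, ∀ j ∈ B, i = j ∨ q ≤ Nat.dist i j) →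
      A.card + B.card + q ≤ s + 2 ∧ (¬(A ⊆ B ∨ B ⊆ A) → A.card + B.card + q ≤ s + 1))
    (A B : Finset ℕ) (s M : ℕ)
    (hn : (A ∪ B).card ≤ n + 1)
    (hA : A ⊆ Finset.Icc 1 s) (hB : B ⊆ Finset.Icc 1 s)
    (hBne : B.Nonempty)
    (hdist : ∀ i ∈ A, ∀ j ∈ B, i = j ∨ q ≤ Nat.dist i j)
    (hMA : M ∈ A) (hMB : M ∉ B)
    (hMmax : ∀ x ∈ A ∪ B, x ≤ M) :
    A.card + B.card + q ≤ s + 2 ∧ (¬(A ⊆ B ∨ B ⊆ A) → A.card + B.card + q ≤ s + 1) := by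
  have hMs : M ≤ s := (Finset.mem_Icc.mp (hA hMA)).2
  have hBlt : ∀ b ∈ B, b + q ≤ M := by
    intro b hb
    rcases hdist M hMA b hb with h | h
    · exact absurd hb (h ▸ hMB)
    · have hle : b ≤ M := hMmax b (Finset.mem_union_right _ hb)
      exact dist_ge' h hle
  have hBicc : B ⊆ Finset.Icc 1 (M - q) := by
    intro b hb
    have h1 := (Finset.mem_Icc.mp (hB hb)).1
    have h2 := hBlt b hb
    rw [Finset.mem_Icc]; omega
  have hqM : q + 1 ≤ M := by
    obtain ⟨b, hb⟩ := hBne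
    have h1 := hBlt b hb
    have h2 := (Finset.mem_Icc.mp (hB hb)).1
    omega
  have hA'icc : A.erase M ⊆ Finset.Icc 1 (M - 1) := by
    intro a ha
    have haA := Finset.mem_of_mem_erase ha
    have h1 := (Finset.mem_Icc.mp (hA haA)).1
    have h2 := hMmax a (Finset.mem_union_left _ haA)
    have h3 := Finset.ne_of_mem_erase ha
    rw [Finset.mem_Icc]; omega
  have hcardU : (A.erase M ∪ B).card ≤ n := by
    have hsubU : A.erase M ∪ B ⊆ (A ∪ B).erase M := by
      intro x hx
      rcases Finset.mem_union.mp hx with h | h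
      · exact Finset.mem_erase.mpr ⟨Finset.ne_of_mem_erase h,
          Finset.mem_union_left _ (Finset.mem_of_mem_erase h)⟩
      · exact Finset.mem_erase.mpr ⟨fun he => hMB (he ▸ h), Finset.mem_union_right _ h⟩
    have h1 := Finset.card_le_card hsubU
    have h2 := Finset.card_erase_of_mem (Finset.mem_union_left B hMA)
    have h3 : 0 < (A ∪ B).card := Finset.card_pos.mpr ⟨M, Finset.mem_union_left B hMA⟩
    omega
  have hAcard : A.card = (A.erase M).card + 1 := by
    have h1 := Finset.card_erase_of_mem hMA
    have h2 : 0 < A.card := Finset.card_pos.mpr ⟨M, hMA⟩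
    omega
  have hdist' : ∀ i ∈ A.erase M, ∀ j ∈ B, i = j ∨ q ≤ Nat.dist i j :=
    fun i hi j hj => hdist i (Finset.mem_of_mem_erase hi) j hj
  by_cases hA'ne : (A.erase M).Nonempty
  · by_cases hBA' : B ⊆ A.erase M
    · -- then B ⊆ A, so second conjunct is vacuous
      have hBsubA : B ⊆ A := hBA'.trans (Finset.erase_subset _ _)
      refine ⟨?_, fun hc => absurd (Or.inr hBsubA) hc⟩
      by_cases hEq : A.erase M = B
      · -- A = B ∪ {M}, B is pairwise q-separated
        have hsep : ∀ a ∈ B, ∀ b ∈ B, a ≠ b → q ≤ Nat.dist a b := by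
          intro a ha b hb hab
          rcases hdist a (hBsubA ha) b hb with h | h
          · exact absurd h hab
          · exact h
        have hsb := sep_bound q B.card B (M - q) le_rfl hBne hBicc hsep
        have hmul : (B.card - 1) * 2 ≤ (B.card - 1) * q := Nat.mul_le_mul_left _ hq
        have hAc : A.card = B.card + 1 := by rw [hAcard, hEq]
        omega
      · -- B ⊊ A.erase M, apply IH with ambient M - 1
        have hBicc' : B ⊆ Finset.Icc 1 (M - 1) := by
          intro b hb
          have h1 := Finset.mem_Icc.mp (hBicc hb)
          rw [Finset.mem_Icc]; omega
        have hres := (ih (A.erase M) B (M - 1) hcardU hA'icc hBicc' hA'ne hBne hEq hdist').1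
        omega
    · -- B ⊄ A.erase M, hence B ⊄ A, and A ⊄ B; need the stronger bound
      have hnB : ¬ B ⊆ A := by
        intro h
        exact hBA' (fun b hb => Finset.mem_erase.mpr ⟨fun he => hMB (he ▸ hb), h hb⟩)
      have hnA : ¬ A ⊆ B := fun h => hMB (h hMA)
      suffices h : A.card + B.card + q ≤ s + 1 by exact ⟨by omega, fun _ => h⟩
      by_cases hA'B : A.erase M ⊆ B
      · -- A.erase M ⊊ B, apply IH with ambient M - q
        have hA'icc2 : A.erase M ⊆ Finset.Icc 1 (M - q) := hA'B.trans hBicc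
        have hne' : A.erase M ≠ B := fun h => hBA' (by rw [h])
        have hres := (ih (A.erase M) B (M - q) hcardU hA'icc2 hBicc hA'ne hBne hne' hdist').1
        omega
      · -- neither containment for (A.erase M, B): use strong part of IH with ambient M - 1
        have hne' : A.erase M ≠ B := fun h => hA'B (by rw [h])
        have hBicc' : B ⊆ Finset.Icc 1 (M - 1) := by
          intro b hb
          have h1 := Finset.mem_Icc.mp (hBicc hb)
          rw [Finset.mem_Icc]; omega
        have hres := (ih (A.erase M) B (M - 1) hcardU hA'icc hBicc' hA'ne hBne hne' hdist').2
          (by tauto)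
        omega
  · -- A = {M}
    have hAM : A = {M} := by
      apply Finset.eq_singleton_iff_unique_mem.mpr
      refine ⟨hMA, fun a ha => ?_⟩
      by_contra hcon
      exact hA'ne ⟨a, Finset.mem_erase.mpr ⟨hcon, ha⟩⟩
    have hAc : A.card = 1 := by rw [hAM]; simp
    have hBcard : B.card ≤ M - q := by
      have h1 := Finset.card_le_card hBicc
      simpa [Nat.card_Icc] using h1
    have h : A.card + B.card + q ≤ s + 1 := by omega
    exact ⟨by omega, fun _ => h⟩

private lemma main_lemma (q : ℕ) (hq : 2 ≤ q) : ∀ n : ℕ, ∀ A B : Finset ℕ, ∀ s : ℕ,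
    (A ∪ B).card ≤ n → A ⊆ Finset.Icc 1 s → B ⊆ Finset.Icc 1 s →
    A.Nonempty → B.Nonempty → A ≠ B →
    (∀ i ∈ A, ∀ j ∈ B, i = j ∨ q ≤ Nat.dist i j) →
    A.card + B.card + q ≤ s + 2 ∧ (¬(A ⊆ B ∨ B ⊆ A) → A.card + B.card + q ≤ s + 1) := by
  intro n
  induction n with
  | zero =>
    intro A B s hn _ _ hAne _ _ _
    have h1 := hAne.card_pos
    have h2 := Finset.card_le_card (Finset.subset_union_left (s₁ := A) (s₂ := B))
    omega
  | succ n ih =>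
    intro A B s hn hA hB hAne hBne hne hdist
    have hUne : (A ∪ B).Nonempty := hAne.mono Finset.subset_union_left
    set M := (A ∪ B).max' hUne with hMdef
    have hMmem : M ∈ A ∪ B := Finset.max'_mem _ _
    have hMmax : ∀ x ∈ A ∪ B, x ≤ M := fun x hx => Finset.le_max' _ _ hx
    by_cases hMA : M ∈ A <;> by_cases hMB : M ∈ B
    · -- M ∈ A ∩ B
      have hMs : M ≤ s := (Finset.mem_Icc.mp (hA hMA)).2
      have hfar : ∀ x ∈ A ∪ B, x ≠ M → x + q ≤ M := by
        intro x hx hxM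
        have hle : x ≤ M := hMmax x hx
        rcases Finset.mem_union.mp hx with h | h
        · rcases hdist x h M hMB with h' | h'
          · exact absurd h' hxM
          · exact dist_ge h' hle
        · rcases hdist M hMA x h with h' | h'
          · exact absurd h'.symm hxM
          · exact dist_ge' h' hle
      have hAins : A = insert M (A.erase M) := (Finset.insert_erase hMA).symm
      have hBins : B = insert M (B.erase M) := (Finset.insert_erase hMB).symm
      have hA'icc : A.erase M ⊆ Finset.Icc 1 (M - q) := by
        intro a ha
        have h1 := (Finset.mem_Icc.mp (hA (Finset.mem_of_mem_erase ha))).1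
        have h2 := hfar a (Finset.mem_union_left _ (Finset.mem_of_mem_erase ha))
          (Finset.ne_of_mem_erase ha)
        rw [Finset.mem_Icc]; omega
      have hB'icc : B.erase M ⊆ Finset.Icc 1 (M - q) := by
        intro b hb
        have h1 := (Finset.mem_Icc.mp (hB (Finset.mem_of_mem_erase hb))).1
        have h2 := hfar b (Finset.mem_union_right _ (Finset.mem_of_mem_erase hb))
          (Finset.ne_of_mem_erase hb)
        rw [Finset.mem_Icc]; omega
      have hA'B' : A.erase M ≠ B.erase M := by
        intro h
        exact hne (by rw [hAins, hBins, h])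
      have hAc : A.card = (A.erase M).card + 1 := by
        have h1 := Finset.card_erase_of_mem hMA
        have h2 : 0 < A.card := Finset.card_pos.mpr ⟨M, hMA⟩
        omega
      have hBc : B.card = (B.erase M).card + 1 := by
        have h1 := Finset.card_erase_of_mem hMB
        have h2 : 0 < B.card := Finset.card_pos.mpr ⟨M, hMB⟩
        omega
      by_cases hA'ne : (A.erase M).Nonempty
      · by_cases hB'ne : (B.erase M).Nonempty
        · have hqM : q + 1 ≤ M := by
            obtain ⟨a, ha⟩ := hA'ne
            have h1 := Finset.mem_Icc.mp (hA'icc ha)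
            omega
          have hcardU : (A.erase M ∪ B.erase M).card ≤ n := by
            have hsubU : A.erase M ∪ B.erase M ⊆ (A ∪ B).erase M := by
              intro x hx
              rcases Finset.mem_union.mp hx with h | h
              · exact Finset.mem_erase.mpr ⟨Finset.ne_of_mem_erase h,
                  Finset.mem_union_left _ (Finset.mem_of_mem_erase h)⟩
              · exact Finset.mem_erase.mpr ⟨Finset.ne_of_mem_erase h,
                  Finset.mem_union_right _ (Finset.mem_of_mem_erase h)⟩
            have h1 := Finset.card_le_card hsubU
            have h2 := Finset.card_erase_of_mem hMmem
            have h3 : 0 < (A ∪ B).card := Finset.card_pos.mpr ⟨M, hMmem⟩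
            omega
          have hdist' : ∀ i ∈ A.erase M, ∀ j ∈ B.erase M, i = j ∨ q ≤ Nat.dist i j :=
            fun i hi j hj => hdist i (Finset.mem_of_mem_erase hi) j
              (Finset.mem_of_mem_erase hj)
          have hres := ih (A.erase M) (B.erase M) (M - q) hcardU hA'icc hB'icc
            hA'ne hB'ne hA'B' hdist'
          constructor
          · have h1 := hres.1
            omega
          · intro hc
            have hc' : ¬(A.erase M ⊆ B.erase M ∨ B.erase M ⊆ A.erase M) := by
              rintro (h | h)
              · exact hc (Or.inl (by rw [hAins, hBins]; exact Finset.insert_subset_insert _ h))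
              · exact hc (Or.inr (by rw [hAins, hBins]; exact Finset.insert_subset_insert _ h))
            have h1 := hres.2 hc'
            omega
        · -- B = {M} ⊆ A
          have hBe : B.erase M = ∅ := Finset.not_nonempty_iff_eq_empty.mp hB'ne
          have hBsub : B ⊆ A := by
            rw [hBins, hBe]
            simpa using hMA
          refine ⟨?_, fun hc => absurd (Or.inr hBsub) hc⟩
          have hA'card : (A.erase M).card ≤ M - q := by
            have h1 := Finset.card_le_card hA'icc
            simpa [Nat.card_Icc] using h1
          have hqM : q + 1 ≤ M := by
            obtain ⟨a, ha⟩ := hA'ne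
            have h1 := Finset.mem_Icc.mp (hA'icc ha)
            omega
          have hB1 : B.card = 1 := by rw [hBc, hBe]; simp
          omega
      · -- A = {M} ⊆ B
        have hAe : A.erase M = ∅ := Finset.not_nonempty_iff_eq_empty.mp hA'ne
        have hAsub : A ⊆ B := by
          rw [hAins, hAe]
          simpa using hMB
        refine ⟨?_, fun hc => absurd (Or.inl hAsub) hc⟩
        have hA1 : A.card = 1 := by rw [hAc, hAe]; simp
        by_cases hB'ne : (B.erase M).Nonempty
        · have hB'card : (B.erase M).card ≤ M - q := by
            have h1 := Finset.card_le_card hB'icc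
            simpa [Nat.card_Icc] using h1
          have hqM : q + 1 ≤ M := by
            obtain ⟨b, hb⟩ := hB'ne
            have h1 := Finset.mem_Icc.mp (hB'icc hb)
            omega
          omega
        · have hBe : B.erase M = ∅ := Finset.not_nonempty_iff_eq_empty.mp hB'ne
          exact absurd (by rw [hAins, hBins, hAe, hBe]) hne
    · -- M ∈ A, M ∉ B
      exact case2 q hq n ih A B s M hn hA hB hBne hdist hMA hMB hMmax
    · -- M ∉ A, M ∈ B : swap roles
      have hdist' : ∀ i ∈ B, ∀ j ∈ A, i = j ∨ q ≤ Nat.dist i j := by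
        intro i hi j hj
        rcases hdist j hj i hi with h | h
        · exact Or.inl h.symm
        · exact Or.inr (by rw [Nat.dist_comm]; exact h)
      have hn' : (B ∪ A).card ≤ n + 1 := by rwa [Finset.union_comm]
      have hMmax' : ∀ x ∈ B ∪ A, x ≤ M := by
        intro x hx
        exact hMmax x (by rwa [Finset.union_comm])
      have hres := case2 q hq n ih B A s M hn' hB hA hAne hdist' hMB hMA hMmax'
      refine ⟨by have := hres.1; omega, fun hc => ?_⟩
      have h1 := hres.2 (by tauto)
      omega
    · exact absurd hMmem (by simp [hMA, hMB])

/-- Lemma on graph paths: vertices are positions 1,...,s along the path. -/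
theorem stmt_4 (s q : ℕ) (hq : 2 ≤ q) (A B : Finset ℕ)
    (hA : A ⊆ Finset.Icc 1 s) (hB : B ⊆ Finset.Icc 1 s)
    (hAne : A.Nonempty) (hBne : B.Nonempty) (hne : A ≠ B)
    (hdist : ∀ i ∈ A, ∀ j ∈ B, i = j ∨ q ≤ Nat.dist i j) :
    A.card + B.card + q ≤ s + 2 ∧
      (s + 2 = A.card + B.card + q → A ⊆ B ∨ B ⊆ A) := by
  have h := main_lemma q hq (A ∪ B).card A B s le_rfl hA hB hAne hBne hne hdist
  refine ⟨h.1, fun heq => ?_⟩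
  by_contra hc
  have h2 := h.2 (by tauto)
  omega
end

section
/- Let Q = v_1, e_1, ..., e_{s-1}, v_s be a graph path. Let A' and B' be nonempty subsets of the edge set {e_1,...,e_{s-1}} with A' != B', such that for each e_i in A' and e_j in B' either i = j or |i - j| >= q where q >= 2. Then s - 1 >= |A'| + |B'| + q - 2, with equality only if A' is a subset of B' or B' is a subset of A'. -/
/-- Key counting lemma: if `M ⊆ D` consists of elements that are `q`-below every
larger element of `D`, and each `m ∈ M` is below `max D`, then
`|D| + (q-1)|M| + min D ≤ max D + 1`. -/
lemma stmt5_key (q : ℕ) (hq : 1 ≤ q) :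
    ∀ n (D M : Finset ℕ) (hD : D.Nonempty), M.card = n → M ⊆ D →
      (∀ m ∈ M, m < D.max' hD) →
      (∀ m ∈ M, ∀ d ∈ D, m < d → m + q ≤ d) →
      D.card + (q - 1) * M.card + D.min' hD ≤ D.max' hD + 1 := by
  intro n
  induction n with
  | zero =>
    intro D M hD hcard hMD hMlt hmark
    have hM : M = ∅ := Finset.card_eq_zero.mp hcard
    have hsub : D ⊆ Finset.Icc (D.min' hD) (D.max' hD) := fun d hd =>
      Finset.mem_Icc.mpr ⟨Finset.min'_le _ _ hd, Finset.le_max' _ _ hd⟩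
    have h1 := Finset.card_le_card hsub
    rw [Nat.card_Icc] at h1
    have h2 : D.min' hD ≤ D.max' hD := Finset.min'_le _ _ (D.max'_mem hD)
    rw [hcard, Nat.mul_zero]
    omega
  | succ n ih =>
    intro D M hD hcard hMD hMlt hmark
    have hM : M.Nonempty := by rw [← Finset.card_pos, hcard]; omega
    set m := M.max' hM with hm
    have hmM : m ∈ M := M.max'_mem hM
    have hmD : m ∈ D := hMD hmM
    set D₁ := D.filter (fun d => d ≤ m) with hD1
    set D₂ := D.filter (fun d => ¬ d ≤ m) with hD2
    have hsplit : D₁.card + D₂.card = D.card :=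
      Finset.card_filter_add_card_filter_not (p := fun d => d ≤ m)
    have hmD1 : m ∈ D₁ := Finset.mem_filter.mpr ⟨hmD, le_refl m⟩
    have hD1ne : D₁.Nonempty := ⟨m, hmD1⟩
    have hmax1 : D₁.max' hD1ne = m :=
      le_antisymm (Finset.max'_le _ _ _ (fun y hy => (Finset.mem_filter.mp hy).2))
        (Finset.le_max' _ _ hmD1)
    have hminD : D.min' hD ∈ D₁ :=
      Finset.mem_filter.mpr ⟨D.min'_mem hD, Finset.min'_le _ _ hmD⟩
    have hmin1 : D₁.min' hD1ne = D.min' hD :=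
      le_antisymm (Finset.min'_le _ _ hminD)
        (Finset.le_min' _ _ _ (fun y hy => Finset.min'_le _ _ (Finset.mem_filter.mp hy).1))
    have hM'card : (M.erase m).card = n := by
      rw [Finset.card_erase_of_mem hmM, hcard]
      omega
    have hM'D1 : M.erase m ⊆ D₁ := by
      intro x hx
      obtain ⟨hne, hxM⟩ := Finset.mem_erase.mp hx
      exact Finset.mem_filter.mpr ⟨hMD hxM, Finset.le_max' M x hxM⟩
    have hlt1 : ∀ x ∈ M.erase m, x < D₁.max' hD1ne := by
      intro x hx
      rw [hmax1]
      obtain ⟨hne, hxM⟩ := Finset.mem_erase.mp hx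
      exact lt_of_le_of_ne (Finset.le_max' M x hxM) hne
    have hmark1 : ∀ x ∈ M.erase m, ∀ d ∈ D₁, x < d → x + q ≤ d := fun x hx d hd =>
      hmark x (Finset.mem_erase.mp hx).2 d (Finset.mem_filter.mp hd).1
    have IH := ih D₁ (M.erase m) hD1ne hM'card hM'D1 hlt1 hmark1
    rw [hmax1, hmin1] at IH
    have hmq : m + q ≤ D.max' hD := hmark m hmM _ (D.max'_mem hD) (hMlt m hmM)
    have hD2sub : D₂ ⊆ Finset.Icc (m + q) (D.max' hD) := by
      intro d hd
      obtain ⟨hdD, hdm⟩ := Finset.mem_filter.mp hd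
      exact Finset.mem_Icc.mpr ⟨hmark m hmM d hdD (by omega), Finset.le_max' _ _ hdD⟩
    have h2card := Finset.card_le_card hD2sub
    rw [Nat.card_Icc] at h2card
    clear_value m D₁ D₂
    rw [hcard, Nat.mul_succ]
    rw [hM'card] at IH
    obtain ⟨P, hPeq⟩ : ∃ P, (q - 1) * n = P := ⟨_, rfl⟩
    rw [hPeq] at IH ⊢
    omega

/-- Version with the ambient interval `Icc 1 (s-1)`. -/
lemma stmt5_key2 (s q : ℕ) (hq : 1 ≤ q) (D M : Finset ℕ) (hD : D.Nonempty)
    (hDs : D ⊆ Finset.Icc 1 (s - 1)) (hMD : M ⊆ D)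
    (hMlt : ∀ m ∈ M, m < D.max' hD)
    (hmark : ∀ m ∈ M, ∀ d ∈ D, m < d → m + q ≤ d) :
    D.card + (q - 1) * M.card + 1 ≤ s := by
  have h := stmt5_key q hq M.card D M hD rfl hMD hMlt hmark
  have hmin := Finset.mem_Icc.mp (hDs (D.min'_mem hD))
  have hmax := Finset.mem_Icc.mp (hDs (D.max'_mem hD))
  omega

/-- The case where one set contains the other. -/
lemma stmt5_sub (s q : ℕ) (hq : 2 ≤ q) (A B : Finset ℕ)
    (hAs : A ⊆ Finset.Icc 1 (s - 1)) (hBA : B ⊆ A) (hBne : B.Nonempty)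
    (hns : ¬ A ⊆ B)
    (h1 : ∀ i ∈ A, ∀ j ∈ B, i < j → i + q ≤ j)
    (h2 : ∀ i ∈ A, ∀ j ∈ B, j < i → j + q ≤ i) :
    A.card + B.card + q ≤ s + 1 := by
  have hABne : (A \ B).Nonempty := by rwa [Finset.sdiff_nonempty]
  have hAne : A.Nonempty := hBne.mono hBA
  set a := (A \ B).max' hABne with ha
  have haAB : a ∈ A \ B := (A \ B).max'_mem hABne
  have haA : a ∈ A := (Finset.mem_sdiff.mp haAB).1
  have haB : a ∉ B := (Finset.mem_sdiff.mp haAB).2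
  set T := A.max' hAne with hT
  set M := (insert a B).erase T with hM
  have hMsub : M ⊆ A := by
    intro x hx
    rcases Finset.mem_insert.mp (Finset.mem_erase.mp hx).2 with h | h
    · exact h ▸ haA
    · exact hBA h
  have hMlt : ∀ x ∈ M, x < A.max' hAne := fun x hx =>
    lt_of_le_of_ne (Finset.le_max' _ _ (hMsub hx)) (Finset.mem_erase.mp hx).1
  have hmark : ∀ x ∈ M, ∀ d ∈ A, x < d → x + q ≤ d := by
    intro x hx d hd hlt
    rcases Finset.mem_insert.mp (Finset.mem_erase.mp hx).2 with h | h
    · subst h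
      by_cases hdB : d ∈ B
      · exact h1 a haA d hdB hlt
      · have : d ≤ a := Finset.le_max' _ d (Finset.mem_sdiff.mpr ⟨hd, hdB⟩)
        omega
    · exact h2 d hd x h hlt
  have hkey := stmt5_key2 s q (by omega) A M hAne hAs hMsub hMlt hmark
  have hsub2 : insert a B ⊆ insert T M := by
    intro x hx
    by_cases hxT : x = T
    · exact hxT ▸ Finset.mem_insert_self T M
    · exact Finset.mem_insert_of_mem (Finset.mem_erase.mpr ⟨hxT, hx⟩)
  have hc1 : (insert a B).card = B.card + 1 := Finset.card_insert_of_notMem haB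
  have hc2 := Finset.card_le_card hsub2
  have hc3 := Finset.card_insert_le T M
  have hBM : B.card ≤ M.card := by omega
  have hb1 : 1 ≤ B.card := Finset.card_pos.mpr hBne
  have hmul : (q - 1) * B.card ≤ (q - 1) * M.card := Nat.mul_le_mul_left _ hBM
  have hmul2 : (q - 1) * B.card = B.card + (q - 2) * B.card := by
    have hq1 : q - 1 = 1 + (q - 2) := by omega
    rw [hq1, add_mul, one_mul]
  have hmul3 : q - 2 ≤ (q - 2) * B.card := Nat.le_mul_of_pos_right _ (by omega)
  clear_value a T M
  obtain ⟨P1, hP1⟩ : ∃ P, (q - 1) * M.card = P := ⟨_, rfl⟩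
  obtain ⟨P2, hP2⟩ : ∃ P, (q - 1) * B.card = P := ⟨_, rfl⟩
  obtain ⟨P3, hP3⟩ : ∃ P, (q - 2) * B.card = P := ⟨_, rfl⟩
  rw [hP1] at hkey hmul
  rw [hP2] at hmul hmul2
  rw [hP3] at hmul2 hmul3
  omega

/-- The case where neither set contains the other: strict inequality. -/
lemma stmt5_strict (s q : ℕ) (hq : 2 ≤ q) (A B : Finset ℕ)
    (hAs : A ⊆ Finset.Icc 1 (s - 1)) (hBs : B ⊆ Finset.Icc 1 (s - 1))
    (hnsA : ¬ A ⊆ B) (hnsB : ¬ B ⊆ A)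
    (h1 : ∀ i ∈ A, ∀ j ∈ B, i < j → i + q ≤ j)
    (h2 : ∀ i ∈ A, ∀ j ∈ B, j < i → j + q ≤ i) :
    A.card + B.card + q + 1 ≤ s + 1 := by
  have hABne : (A \ B).Nonempty := by rwa [Finset.sdiff_nonempty]
  have hBAne : (B \ A).Nonempty := by rwa [Finset.sdiff_nonempty]
  set a := (A \ B).max' hABne with ha
  set b := (B \ A).max' hBAne with hb
  have haAB : a ∈ A \ B := (A \ B).max'_mem hABne
  have hbBA : b ∈ B \ A := (B \ A).max'_mem hBAne
  have haA : a ∈ A := (Finset.mem_sdiff.mp haAB).1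
  have haB : a ∉ B := (Finset.mem_sdiff.mp haAB).2
  have hbB : b ∈ B := (Finset.mem_sdiff.mp hbBA).1
  have hbA : b ∉ A := (Finset.mem_sdiff.mp hbBA).2
  set D := A ∪ B with hD
  have hDne : D.Nonempty := ⟨a, Finset.mem_union_left _ haA⟩
  have hDs : D ⊆ Finset.Icc 1 (s - 1) := Finset.union_subset hAs hBs
  set C := A ∩ B with hC
  set T := D.max' hDne with hT
  set M := (insert a (insert b C)).erase T with hM
  have hCA : C ⊆ A := Finset.inter_subset_left
  have hCB : C ⊆ B := Finset.inter_subset_right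
  have hMsub : M ⊆ D := by
    intro x hx
    rcases Finset.mem_insert.mp (Finset.mem_erase.mp hx).2 with h | h
    · exact h ▸ Finset.mem_union_left _ haA
    · rcases Finset.mem_insert.mp h with h' | h'
      · exact h' ▸ Finset.mem_union_right _ hbB
      · exact Finset.mem_union_left _ (hCA h')
  have hMlt : ∀ x ∈ M, x < D.max' hDne := fun x hx =>
    lt_of_le_of_ne (Finset.le_max' _ _ (hMsub hx)) (Finset.mem_erase.mp hx).1
  have hmark : ∀ x ∈ M, ∀ d ∈ D, x < d → x + q ≤ d := by
    intro x hx d hd hlt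
    rcases Finset.mem_insert.mp (Finset.mem_erase.mp hx).2 with h | h
    · -- x = a
      subst h
      by_cases hdB : d ∈ B
      · exact h1 a haA d hdB hlt
      · rcases Finset.mem_union.mp hd with h' | h'
        · have : d ≤ a := Finset.le_max' _ d (Finset.mem_sdiff.mpr ⟨h', hdB⟩)
          omega
        · exact absurd h' hdB
    · rcases Finset.mem_insert.mp h with h' | h'
      · -- x = b
        subst h'
        by_cases hdA : d ∈ A
        · exact h2 d hdA b hbB hlt
        · rcases Finset.mem_union.mp hd with h'' | h''
          · exact absurd h'' hdA
          · have : d ≤ b := Finset.le_max' _ d (Finset.mem_sdiff.mpr ⟨h'', hdA⟩)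
            omega
      · -- x ∈ C
        rcases Finset.mem_union.mp hd with h'' | h''
        · exact h2 d h'' x (hCB h') hlt
        · exact h1 x (hCA h') d h'' hlt
  have hkey := stmt5_key2 s q (by omega) D M hDne hDs hMsub hMlt hmark
  have hab : a ≠ b := fun h => hbA (h ▸ haA)
  have hbC : b ∉ C := fun h => hbA (hCA h)
  have haC : a ∉ insert b C := by
    simp only [Finset.mem_insert]
    rintro (h | h)
    · exact hab h
    · exact haB (hCB h)
  have hc0 : (insert a (insert b C)).card = C.card + 2 := by
    rw [Finset.card_insert_of_notMem haC, Finset.card_insert_of_notMem hbC]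
  have hsub2 : insert a (insert b C) ⊆ insert T M := by
    intro x hx
    by_cases hxT : x = T
    · exact hxT ▸ Finset.mem_insert_self T M
    · exact Finset.mem_insert_of_mem (Finset.mem_erase.mpr ⟨hxT, hx⟩)
  have hc2 := Finset.card_le_card hsub2
  have hc3 := Finset.card_insert_le T M
  have hCM : C.card + 1 ≤ M.card := by omega
  have hcards : D.card + C.card = A.card + B.card := Finset.card_union_add_card_inter A B
  have hmul : (q - 1) * (C.card + 1) ≤ (q - 1) * M.card := Nat.mul_le_mul_left _ hCM
  have hmul2 : (q - 1) * (C.card + 1) = (q - 1) * C.card + (q - 1) := by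
    rw [Nat.mul_succ]
  have hmul3 : C.card ≤ (q - 1) * C.card := Nat.le_mul_of_pos_left _ (by omega)
  clear_value a b D C T M
  obtain ⟨P1, hP1⟩ : ∃ P, (q - 1) * M.card = P := ⟨_, rfl⟩
  obtain ⟨P2, hP2⟩ : ∃ P, (q - 1) * (C.card + 1) = P := ⟨_, rfl⟩
  obtain ⟨P3, hP3⟩ : ∃ P, (q - 1) * C.card = P := ⟨_, rfl⟩
  rw [hP1] at hkey hmul
  rw [hP2] at hmul hmul2
  rw [hP3] at hmul2 hmul3
  omega

/-- Lemma on graph paths: edges are identified with their positions 1,...,s-1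
along the path (edge i joins vertices i and i+1).  The conclusion
`|A'| + |B'| + q ≤ s + 1` is equivalent to `s - 1 ≥ |A'| + |B'| + q - 2`. -/
theorem stmt_5 (s q : ℕ) (hq : 2 ≤ q) (A' B' : Finset ℕ)
    (hA : A' ⊆ Finset.Icc 1 (s - 1)) (hB : B' ⊆ Finset.Icc 1 (s - 1))
    (hAne : A'.Nonempty) (hBne : B'.Nonempty) (hne : A' ≠ B')
    (hdist : ∀ i ∈ A', ∀ j ∈ B', i = j ∨ q ≤ Nat.dist i j) :
    A'.card + B'.card + q ≤ s + 1 ∧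
      (s + 1 = A'.card + B'.card + q → A' ⊆ B' ∨ B' ⊆ A') := by
  have h1 : ∀ i ∈ A', ∀ j ∈ B', i < j → i + q ≤ j := by
    intro i hi j hj hlt
    rcases hdist i hi j hj with h | h
    · omega
    · simp only [Nat.dist] at h; omega
  have h2 : ∀ i ∈ A', ∀ j ∈ B', j < i → j + q ≤ i := by
    intro i hi j hj hlt
    rcases hdist i hi j hj with h | h
    · omega
    · simp only [Nat.dist] at h; omega
  by_cases hsub : A' ⊆ B' ∨ B' ⊆ A'
  · refine ⟨?_, fun _ => hsub⟩
    rcases hsub with h | h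
    · have h1' : ∀ i ∈ B', ∀ j ∈ A', i < j → i + q ≤ j := fun i hi j hj => h2 j hj i hi
      have h2' : ∀ i ∈ B', ∀ j ∈ A', j < i → j + q ≤ i := fun i hi j hj => h1 j hj i hi
      have := stmt5_sub s q hq B' A' hB h hAne
        (fun hc => hne (Finset.Subset.antisymm h hc)) h1' h2'
      omega
    · have := stmt5_sub s q hq A' B' hA h hBne
        (fun hc => hne (Finset.Subset.antisymm hc h)) h1 h2
      omega
  · push_neg at hsub
    have := stmt5_strict s q hq A' B' hA hB hsub.1 hsub.2 h1 h2
    exact ⟨by omega, fun h => by omega⟩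
end

section
/- Let Q = v_1, e_1, ..., e_{s-1}, v_s be a graph path, let F be a set of f edges of Q, and let A and B be subsets of the vertex set of Q that are vertex-disjoint from all edges in F and such that for each v_i in A and v_j in B, either i = j or |i - j| >= 2. If A = B and A is nonempty, then s >= |A| + |B| + f - 1. If A != B and both are nonempty, then s >= |A| + |B| + f, with equality only if A is a subset of B or B is a subset of A. -/
/-- Lemma on graph paths: vertices are positions 1,...,s, edges are positions
1,...,s-1 (edge i joins vertices i and i+1).  `A` and `B` avoid the endpoints of
all edges in `F`. -/
theorem stmt_6 (s f : ℕ) (F A B : Finset ℕ)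
    (hF : F ⊆ Finset.Icc 1 (s - 1)) (hf : F.card = f)
    (hA : A ⊆ Finset.Icc 1 s) (hB : B ⊆ Finset.Icc 1 s)
    (hFA : ∀ i ∈ F, i ∉ A ∧ i + 1 ∉ A)
    (hFB : ∀ i ∈ F, i ∉ B ∧ i + 1 ∉ B)
    (hdist : ∀ i ∈ A, ∀ j ∈ B, i = j ∨ 2 ≤ Nat.dist i j) :
    (A = B → A.Nonempty → A.card + B.card + f ≤ s + 1) ∧
      (A ≠ B → A.Nonempty → B.Nonempty →
        A.card + B.card + f ≤ s ∧
          (A.card + B.card + f = s → A ⊆ B ∨ B ⊆ A)) := by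
  classical
  have hd1 : ∀ x, x ∈ A → x + 1 ∉ B := by
    intro x hx hxB
    rcases hdist x hx (x + 1) hxB with h | h
    · omega
    · simp [Nat.dist] at h
  have hd2 : ∀ x, x ∈ B → x + 1 ∉ A := by
    intro x hx hxA
    rcases hdist (x + 1) hxA x hx with h | h
    · omega
    · simp [Nat.dist] at h
  -- key counting lemma
  have key : ∀ M : Finset ℕ,
      (∀ m ∈ M, (m ∈ A ∧ m ∉ B ∧ ∀ y ∈ A, y ∉ B → y ≤ m) ∨
                (m ∈ B ∧ m ∉ A ∧ ∀ y ∈ B, y ∉ A → y ≤ m)) →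
      A.card + B.card + f + M.card ≤ s + 1 := by
    intro M hM
    have hMnotAB : ∀ m ∈ M, m + 1 ∉ A ∧ m + 1 ∉ B := by
      intro m hm
      rcases hM m hm with ⟨hmA, hmB, hmax⟩ | ⟨hmB, hmA, hmax⟩
      · constructor
        · intro h1
          have h2 : m + 1 ∉ B := hd1 m hmA
          have := hmax _ h1 h2
          omega
        · exact hd1 m hmA
      · constructor
        · exact hd2 m hmB
        · intro h1
          have h2 : m + 1 ∉ A := hd2 m hmB
          have := hmax _ h1 h2
          omega
    set U : Finset ℕ :=
      ((A ∪ B) ∪ (A ∩ B).image (· + 1)) ∪ (F.image (· + 1) ∪ M.image (· + 1)) with hU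
    have hinj : Function.Injective (· + 1 : ℕ → ℕ) := fun a b h => Nat.succ_injective h
    have d12 : Disjoint (A ∪ B) ((A ∩ B).image (· + 1)) := by
      rw [Finset.disjoint_left]
      intro y hy hy'
      obtain ⟨x, hx, rfl⟩ := Finset.mem_image.1 hy'
      rw [Finset.mem_inter] at hx
      rcases Finset.mem_union.1 hy with h | h
      · exact hd2 x hx.2 h
      · exact hd1 x hx.1 h
    have d34 : Disjoint (F.image (· + 1)) (M.image (· + 1)) := by
      rw [Finset.disjoint_left]
      intro y hy hy'
      obtain ⟨i, hi, hieq⟩ := Finset.mem_image.1 hy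
      obtain ⟨m, hm, hmeq⟩ := Finset.mem_image.1 hy'
      have : i = m := by omega
      subst this
      rcases hM i hm with ⟨h1, _, _⟩ | ⟨h1, _, _⟩
      · exact (hFA i hi).1 h1
      · exact (hFB i hi).1 h1
    have dbig : Disjoint ((A ∪ B) ∪ (A ∩ B).image (· + 1))
        (F.image (· + 1) ∪ M.image (· + 1)) := by
      rw [Finset.disjoint_right]
      intro y hy hy'
      have hyAB : y ∉ A ∪ B := by
        rcases Finset.mem_union.1 hy with h | h
        · obtain ⟨i, hi, rfl⟩ := Finset.mem_image.1 h
          intro hmem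
          rcases Finset.mem_union.1 hmem with h' | h'
          · exact (hFA i hi).2 h'
          · exact (hFB i hi).2 h'
        · obtain ⟨m, hm, rfl⟩ := Finset.mem_image.1 h
          intro hmem
          rcases Finset.mem_union.1 hmem with h' | h'
          · exact (hMnotAB m hm).1 h'
          · exact (hMnotAB m hm).2 h'
      have hyC : y ∉ (A ∩ B).image (· + 1) := by
        intro hmem
        obtain ⟨x, hx, rfl⟩ := Finset.mem_image.1 hmem
        rw [Finset.mem_inter] at hx
        rcases Finset.mem_union.1 hy with h | h
        · obtain ⟨i, hi, hieq⟩ := Finset.mem_image.1 h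
          have : i = x := by omega
          subst this
          exact (hFA i hi).1 hx.1
        · obtain ⟨m, hm, hmeq⟩ := Finset.mem_image.1 h
          have : m = x := by omega
          subst this
          rcases hM m hm with ⟨_, h2, _⟩ | ⟨_, h2, _⟩
          · exact h2 hx.2
          · exact h2 hx.1
      rcases Finset.mem_union.1 hy' with h | h
      · exact hyAB h
      · exact hyC h
    have hcard : U.card = A.card + B.card + f + M.card := by
      rw [hU, Finset.card_union_of_disjoint dbig,
        Finset.card_union_of_disjoint d12, Finset.card_union_of_disjoint d34,
        Finset.card_image_of_injective _ hinj, Finset.card_image_of_injective _ hinj,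
        Finset.card_image_of_injective _ hinj]
      have := Finset.card_union_add_card_inter A B
      omega
    have hsub : U ⊆ Finset.Icc 1 (s + 1) := by
      intro y hy
      rw [Finset.mem_Icc]
      have hABs : ∀ z, z ∈ A ∪ B → 1 ≤ z ∧ z ≤ s := by
        intro z hz
        rcases Finset.mem_union.1 hz with h | h
        · exact Finset.mem_Icc.1 (hA h)
        · exact Finset.mem_Icc.1 (hB h)
      rcases Finset.mem_union.1 hy with h | h
      · rcases Finset.mem_union.1 h with h' | h'
        · have := hABs y h'
          omega
        · obtain ⟨x, hx, rfl⟩ := Finset.mem_image.1 h'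
          rw [Finset.mem_inter] at hx
          have := hABs x (Finset.mem_union.2 (Or.inl hx.1))
          omega
      · rcases Finset.mem_union.1 h with h' | h'
        · obtain ⟨i, hi, rfl⟩ := Finset.mem_image.1 h'
          have := Finset.mem_Icc.1 (hF hi)
          omega
        · obtain ⟨m, hm, rfl⟩ := Finset.mem_image.1 h'
          rcases hM m hm with ⟨h1, _, _⟩ | ⟨h1, _, _⟩
          · have := hABs m (Finset.mem_union.2 (Or.inl h1))
            omega
          · have := hABs m (Finset.mem_union.2 (Or.inr h1))
            omega
    have := Finset.card_le_card hsub
    rw [hcard, Nat.card_Icc] at this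
    omega
  constructor
  · intro _ _
    have := key ∅ (by simp)
    simpa using this
  · intro hne _ _
    have hD : (A \ B).Nonempty ∨ (B \ A).Nonempty := by
      by_contra h
      push_neg at h
      simp only [Finset.not_nonempty_iff_eq_empty, Finset.sdiff_eq_empty_iff_subset] at h
      exact hne (Finset.Subset.antisymm h.1 h.2)
    have maxprop : ∀ (X Y : Finset ℕ) (h : (X \ Y).Nonempty),
        (X \ Y).max' h ∈ X ∧ (X \ Y).max' h ∉ Y ∧
          ∀ y ∈ X, y ∉ Y → y ≤ (X \ Y).max' h := by
      intro X Y h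
      have hmem := Finset.max'_mem (X \ Y) h
      rw [Finset.mem_sdiff] at hmem
      refine ⟨hmem.1, hmem.2, fun y hy hy' => ?_⟩
      exact Finset.le_max' _ _ (Finset.mem_sdiff.2 ⟨hy, hy'⟩)
    obtain ⟨m, hm⟩ : ∃ m, (m ∈ A ∧ m ∉ B ∧ ∀ y ∈ A, y ∉ B → y ≤ m) ∨
        (m ∈ B ∧ m ∉ A ∧ ∀ y ∈ B, y ∉ A → y ≤ m) := by
      rcases hD with h | h
      · exact ⟨(A \ B).max' h, Or.inl (maxprop A B h)⟩
      · exact ⟨(B \ A).max' h, Or.inr (maxprop B A h)⟩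
    have h1 : A.card + B.card + f + 1 ≤ s + 1 := by
      have := key {m} (by simpa using hm)
      simpa using this
    refine ⟨by omega, ?_⟩
    intro heq
    by_contra hcon
    push_neg at hcon
    have hAB : (A \ B).Nonempty := by
      rw [Finset.nonempty_iff_ne_empty, Ne, Finset.sdiff_eq_empty_iff_subset]
      exact hcon.1
    have hBA : (B \ A).Nonempty := by
      rw [Finset.nonempty_iff_ne_empty, Ne, Finset.sdiff_eq_empty_iff_subset]
      exact hcon.2
    set m1 := (A \ B).max' hAB with hm1
    set m2 := (B \ A).max' hBA with hm2
    have p1 := maxprop A B hAB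
    have p2 := maxprop B A hBA
    have hne12 : m1 ≠ m2 := by
      intro h
      exact p1.2.1 (by rw [← hm1, h, hm2]; exact p2.1)
    have h2 : A.card + B.card + f + 2 ≤ s + 1 := by
      have := key {m1, m2} (by
        intro m hm
        rcases Finset.mem_insert.1 hm with rfl | hm'
        · exact Or.inl p1
        · rw [Finset.mem_singleton] at hm'
          subst hm'
          exact Or.inr p2)
      rwa [Finset.card_insert_of_notMem (by simpa using hne12),
        Finset.card_singleton] at this
    omega
end

section
/- For all n > 3 and 3 <= r <= n/2, let H'_1 be the r-uniform hypergraph formed by a clique Q of size ceil((n+2)/2) and a clique R of size floor((n+2)/2) sharing exactly two vertices x and y (i.e., all r-element subsets of Q and all r-element subsets of R are edges, with |Q ∩ R| = {x,y} and |Q ∪ R| = n). Then the minimum degree of H'_1 equals binomial(floor(n/2), r-1), and H'_1 contains no hamiltonian Berge path from x to y. -/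
variable {α : Type*}

/-- A Berge path with `s` vertices `v 0, ..., v (s-1)` and `s-1` edges
`e 0, ..., e (s-2)` in the hypergraph with edge set `H`:  the listed vertices
are distinct, the listed edges are distinct edges of `H`, and
`{v i, v (i+1)} ⊆ e i` for each `i < s - 1`. -/
def IsBergePath (H : Finset (Finset α)) (s : ℕ) (v : ℕ → α) (e : ℕ → Finset α) : Prop :=
  (∀ i j, i < s → j < s → v i = v j → i = j) ∧
  (∀ i j, i < s - 1 → j < s - 1 → e i = e j → i = j) ∧
  (∀ i, i < s - 1 → e i ∈ H) ∧
  (∀ i, i < s - 1 → v i ∈ e i ∧ v (i + 1) ∈ e i)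

/-- A hamiltonian Berge path from `x` to `y` in a hypergraph on `n` vertices
(the vertex set being the whole type `α`): a Berge path with `n` vertices
starting at `x`, ending at `y`, and visiting every vertex. -/
def IsHamBergePathFromTo (H : Finset (Finset α)) (n : ℕ) (x y : α) : Prop :=
  ∃ (v : ℕ → α) (e : ℕ → Finset α),
    IsBergePath H n v e ∧ v 0 = x ∧ v (n - 1) = y ∧ ∀ z : α, ∃ i < n, v i = z

/-- The degree of a vertex in a hypergraph: the number of edges containing it. -/
def hdeg [DecidableEq α] (H : Finset (Finset α)) (w : α) : ℕ :=
  (H.filter (fun g => w ∈ g)).card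

/-! Every edge lies inside `Q` or inside `R`, so a Berge path can only pass between `Q \ R`
and `R \ Q` through `Q ∩ R = {x, y}`. A path from `x` to `y` spends these vertices as its
endpoints, so its interior stays on the side of its second vertex and misses the other side.
A vertex of a clique `S` lies in `(|S| - 1).choose (r - 1)` of its edges; this is at least
`(n / 2).choose (r - 1)` for both cliques, and exact for the vertices of `R \ Q`. -/

open Finset

section

variable [DecidableEq α]

theorem hdeg_mono {H H' : Finset (Finset α)} (h : H ⊆ H') (w : α) : hdeg H w ≤ hdeg H' w :=
  card_le_card (filter_subset_filter _ h)

theorem hdeg_union_of_forall_notMem {H₁ H₂ : Finset (Finset α)} {w : α}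
    (h : ∀ X ∈ H₁, w ∉ X) : hdeg (H₁ ∪ H₂) w = hdeg H₂ w := by
  rw [hdeg, hdeg, filter_union, filter_false_of_mem h, empty_union]

theorem hdeg_powersetCard {S : Finset α} {w : α} (hw : w ∈ S) {r : ℕ} (hr : 0 < r) :
    hdeg (S.powersetCard r) w = (#S - 1).choose (r - 1) := by
  simpa [hdeg] using
    card_filter_powersetCard_subset {w} S r (singleton_subset_iff.2 hw)
      (by rw [card_singleton]; exact hr)

theorem choose_le_hdeg_of_powersetCard_subset {H : Finset (Finset α)} {S : Finset α} {w : α}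
    (hw : w ∈ S) {r : ℕ} (hr : 0 < r) (hS : S.powersetCard r ⊆ H) :
    (#S - 1).choose (r - 1) ≤ hdeg H w :=
  hdeg_powersetCard hw hr ▸ hdeg_mono hS w

theorem IsBergePath.forall_mem_of_mem_one {H : Finset (Finset α)} {s : ℕ} {v : ℕ → α}
    {e : ℕ → Finset α} (hp : IsBergePath H s v e) {Q R : Finset α}
    (hH : ∀ X ∈ H, X ⊆ Q ∨ X ⊆ R) (hQR : Q ∩ R = {v 0, v (s - 1)}) (h1 : v 1 ∈ Q) :
    ∀ i < s, v i ∈ Q := by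
  obtain ⟨hv, -, heH, hve⟩ := hp
  have hends : v 0 ∈ Q ∧ v (s - 1) ∈ Q := by
    have : {v 0, v (s - 1)} ⊆ Q := hQR ▸ inter_subset_left
    exact ⟨this (mem_insert_self _ _), this (mem_insert_of_mem (mem_singleton_self _))⟩
  have hinterior : ∀ i, 1 ≤ i → i < s - 1 → v i ∈ Q := by
    intro i hi
    induction i, hi using Nat.le_induction with
    | base => exact fun _ => h1
    | succ k hk ih =>
      intro hks
      rcases hH _ (heH k (by omega)) with hQ | hR
      · exact hQ (hve k (by omega)).2
      · have hcut : v k ∈ Q ∩ R := mem_inter.2 ⟨ih (by omega), hR (hve k (by omega)).1⟩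
        rw [hQR, mem_insert, mem_singleton] at hcut
        rcases hcut with h | h
        · exact absurd (hv k 0 (by omega) (by omega) h) (by omega)
        · exact absurd (hv k (s - 1) (by omega) (by omega) h) (by omega)
  intro i hi
  rcases Nat.eq_zero_or_pos i with rfl | hi0
  · exact hends.1
  rcases Nat.lt_or_ge i (s - 1) with his | his
  · exact hinterior i hi0 his
  · exact (show i = s - 1 by omega) ▸ hends.2

theorem not_isHamBergePathFromTo_of_cut {H : Finset (Finset α)} {n : ℕ} {x y : α}
    {Q R : Finset α} (hn : 2 ≤ n) (hH : ∀ X ∈ H, X ⊆ Q ∨ X ⊆ R) (hQR : Q ∩ R = {x, y})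
    (hQ : ∃ b, b ∉ Q) (hR : ∃ a, a ∉ R) : ¬ IsHamBergePathFromTo H n x y := by
  rintro ⟨v, e, hp, rfl, rfl, hsurj⟩
  have hcover : ∀ S T : Finset α, (∀ X ∈ H, X ⊆ S ∨ X ⊆ T) → S ∩ T = {v 0, v (n - 1)} →
      v 1 ∈ S → ∀ z, z ∈ S := fun S T hST hcut h1 z => by
    obtain ⟨i, hi, rfl⟩ := hsurj z
    exact hp.forall_mem_of_mem_one hST hcut h1 i hi
  have hv1 := (hp.2.2.2 0 (by omega)).2
  rcases hH _ (hp.2.2.1 0 (by omega)) with he | he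
  · obtain ⟨b, hb⟩ := hQ
    exact hb (hcover Q R hH hQR (he hv1) b)
  · obtain ⟨a, ha⟩ := hR
    exact ha (hcover R Q (fun X hX => (hH X hX).symm) (inter_comm R Q ▸ hQR) (he hv1) a)

theorem exists_mem_notMem_of_inter_eq_pair {Q R : Finset α} {x y : α}
    (hQR : Q ∩ R = {x, y}) (hQ : 2 < #Q) : ∃ a ∈ Q, a ∉ R := by
  have : #(Q ∩ R) < #Q := hQR ▸ card_le_two.trans_lt hQ
  obtain ⟨a, haQ, ha⟩ := exists_mem_notMem_of_card_lt_card this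
  exact ⟨a, haQ, fun haR => ha (mem_inter.2 ⟨haQ, haR⟩)⟩

end

theorem stmt_7_general [Fintype α] [DecidableEq α] (n r : ℕ)
    (hn : 3 < n) (hr : 3 ≤ r)
    (x y : α) (Q R : Finset α)
    (hQ : Q.card = (n + 3) / 2) (hR : R.card = (n + 2) / 2)
    (hQR : Q ∩ R = {x, y}) (hU : Q ∪ R = Finset.univ) :
    let H : Finset (Finset α) :=
      Finset.univ.powerset.filter (fun X => X.card = r ∧ (X ⊆ Q ∨ X ⊆ R))
    (∀ w : α, Nat.choose (n / 2) (r - 1) ≤ hdeg H w) ∧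
    (∃ w : α, hdeg H w = Nat.choose (n / 2) (r - 1)) ∧
    ¬ IsHamBergePathFromTo H n x y := by
  intro H
  have hH : H = Q.powersetCard r ∪ R.powersetCard r := by
    ext X
    simp only [H, mem_filter, mem_powerset, subset_univ, true_and, mem_union, mem_powersetCard]
    tauto
  obtain ⟨a, -, haR⟩ := exists_mem_notMem_of_inter_eq_pair hQR (by omega)
  obtain ⟨b, hbR, hbQ⟩ := exists_mem_notMem_of_inter_eq_pair (inter_comm R Q ▸ hQR) (by omega)
  refine ⟨fun w => ?_, ⟨b, ?_⟩, ?_⟩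
  · rcases mem_union.1 (hU ▸ mem_univ w) with hw | hw
    · exact (Nat.choose_le_choose _ (by omega)).trans
        (choose_le_hdeg_of_powersetCard_subset hw (by omega) (hH ▸ subset_union_left))
    · exact (Nat.choose_le_choose _ (by omega)).trans
        (choose_le_hdeg_of_powersetCard_subset hw (by omega) (hH ▸ subset_union_right))
  · rw [hH, hdeg_union_of_forall_notMem fun X hX hbX => hbQ ((mem_powersetCard.1 hX).1 hbX),
      hdeg_powersetCard hbR (by omega), hR]
    congr 1
    omega
  · exact not_isHamBergePathFromTo_of_cut (by omega)
      (fun X hX => ((mem_filter.1 hX).2).2) hQR ⟨b, hbQ⟩ ⟨a, haR⟩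

/-- The hypergraph $H'_1$ formed by two cliques $Q$, $R$ of sizes
$\lceil (n+2)/2 \rceil$ and $\lfloor (n+2)/2 \rfloor$ sharing exactly the two
vertices $x, y$ has minimum degree $\binom{\lfloor n/2 \rfloor}{r-1}$ and no
hamiltonian Berge path from $x$ to $y$. -/
theorem stmt_7 [Fintype α] [DecidableEq α] (n r : ℕ)
    (hcard : Fintype.card α = n) (hn : 3 < n) (hr : 3 ≤ r) (hrn : 2 * r ≤ n)
    (x y : α) (hxy : x ≠ y) (Q R : Finset α)
    (hQ : Q.card = (n + 3) / 2) (hR : R.card = (n + 2) / 2)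
    (hQR : Q ∩ R = {x, y}) (hU : Q ∪ R = Finset.univ) :
    let H : Finset (Finset α) :=
      Finset.univ.powerset.filter (fun X => X.card = r ∧ (X ⊆ Q ∨ X ⊆ R))
    (∀ w : α, Nat.choose (n / 2) (r - 1) ≤ hdeg H w) ∧
    (∃ w : α, hdeg H w = Nat.choose (n / 2) (r - 1)) ∧
    ¬ IsHamBergePathFromTo H n x y :=
  stmt_7_general n r hn hr x y Q R hQ hR hQR hU
end

section
/- Let n > r >= 3 and let A, B be disjoint vertex sets with |A| = ceil(n/2) and |B| = floor(n/2). Let H'_2 be the r-uniform hypergraph on A ∪ B whose edges are all r-element subsets X of A ∪ B with |X ∩ A| <= 1. Then for any two distinct vertices x, y in B, H'_2 contains no hamiltonian Berge path from x to y. -/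
variable {α : Type*}

/-!
The vertices of `A` can never be consecutive on a Berge path of `H'_2`, since the edge joining
them would meet `A` twice. On a hamiltonian path between two vertices of `B`, the positions of
the `⌈n/2⌉` vertices of `A` therefore form a set of pairwise non-consecutive indices among the
`n - 2` inner positions `1, …, n - 2`, and there are at most `⌊(n - 1)/2⌋` such indices.
-/

open Finset

/-- `i ↦ (i - 1) / 2` maps such a set injectively into `range (m / 2)`. -/
theorem Finset.card_le_half_of_succ_notMem {S : Finset ℕ} {m : ℕ} (hS : S ⊆ Ioo 0 m)
    (hsucc : ∀ i ∈ S, i + 1 ∉ S) : #S ≤ m / 2 := by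
  rw [← card_range (m / 2)]
  refine card_le_card_of_injOn (fun i => (i - 1) / 2) (fun i hi => ?_) (fun i hi j hj hij => ?_)
  · have := mem_Ioo.mp (hS hi)
    simp only [coe_range, Set.mem_Iio]
    omega
  · have hi0 := (mem_Ioo.mp (hS hi)).1
    have hj0 := (mem_Ioo.mp (hS hj)).1
    have hji : j ≠ i + 1 := fun h => hsucc i hi (h ▸ hj)
    have hij' : i ≠ j + 1 := fun h => hsucc j hj (h ▸ hi)
    simp only at hij
    omega

namespace IsBergePath

variable [DecidableEq α] {H : Finset (Finset α)} {s : ℕ} {v : ℕ → α} {e : ℕ → Finset α}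

theorem succ_notMem_of_mem {A : Finset α} (hp : IsBergePath H s v e)
    (hH : ∀ X ∈ H, #(X ∩ A) ≤ 1) {i : ℕ} (hi : i + 1 < s) (hvi : v i ∈ A) :
    v (i + 1) ∉ A := by
  intro hvi'
  have hne : v i ≠ v (i + 1) := fun h => by have := hp.1 i (i + 1) (by omega) hi h; omega
  obtain ⟨hvie, hvie'⟩ := hp.2.2.2 i (by omega)
  exact hne <| card_le_one.mp (hH _ (hp.2.2.1 i (by omega))) _ (mem_inter.mpr ⟨hvie, hvi⟩) _
    (mem_inter.mpr ⟨hvie', hvi'⟩)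

end IsBergePath

theorem card_filter_range_mem_eq_card [DecidableEq α] {n : ℕ} {v : ℕ → α}
    (hinj : ∀ i j, i < n → j < n → v i = v j → i = j) (hsurj : ∀ z, ∃ i < n, v i = z)
    (A : Finset α) : #((range n).filter (v · ∈ A)) = #A := by
  refine card_bij (fun i _ => v i) (fun i hi => (mem_filter.mp hi).2) (fun i hi j hj h => ?_)
    (fun a ha => ?_)
  · exact hinj i j (mem_range.mp (mem_filter.mp hi).1) (mem_range.mp (mem_filter.mp hj).1) h
  · obtain ⟨i, hi, rfl⟩ := hsurj a
    exact ⟨i, mem_filter.mpr ⟨mem_range.mpr hi, ha⟩, rfl⟩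

theorem stmt_8_general [Fintype α] [DecidableEq α] (n r : ℕ)
    (A B : Finset α) (hAB : Disjoint A B)
    (hA : A.card = (n + 1) / 2)
    (x y : α) (hx : x ∈ B) (hy : y ∈ B) :
    ¬ IsHamBergePathFromTo
        (Finset.univ.powerset.filter (fun X => X.card = r ∧ (X ∩ A).card ≤ 1))
        n x y := by
  rintro ⟨v, e, hp, hv0, hvlast, hsurj⟩
  have hn : 0 < n := by obtain ⟨k, hk, -⟩ := hsurj x; omega
  set S := (range n).filter (v · ∈ A)
  have hSsub : S ⊆ Ioo 0 (n - 1) := by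
    intro i hi
    obtain ⟨hin, hviA⟩ := mem_filter.mp hi
    have hi0 : i ≠ 0 := by rintro rfl; exact disjoint_left.mp hAB (hv0 ▸ hviA) hx
    have hilast : i ≠ n - 1 := by rintro rfl; exact disjoint_left.mp hAB (hvlast ▸ hviA) hy
    exact mem_Ioo.mpr ⟨by omega, by have := mem_range.mp hin; omega⟩
  have hSsucc : ∀ i ∈ S, i + 1 ∉ S := fun i hi hi' =>
    hp.succ_notMem_of_mem (fun X hX => (mem_filter.mp hX).2.2)
      (mem_range.mp (mem_filter.mp hi').1) (mem_filter.mp hi).2 (mem_filter.mp hi').2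
  have hSA : #S = #A := card_filter_range_mem_eq_card hp.1 hsurj A
  have := card_le_half_of_succ_notMem hSsub hSsucc
  omega

/-- The hypergraph $H'_2$ on $A \cup B$ whose edges are the $r$-sets meeting
$A$ in at most one vertex has no hamiltonian Berge path between two vertices of
$B$. -/
theorem stmt_8 [Fintype α] [DecidableEq α] (n r : ℕ)
    (hcard : Fintype.card α = n) (hr : 3 ≤ r) (hrn : r < n)
    (A B : Finset α) (hAB : Disjoint A B) (hU : A ∪ B = Finset.univ)
    (hA : A.card = (n + 1) / 2) (hB : B.card = n / 2)
    (x y : α) (hx : x ∈ B) (hy : y ∈ B) (hxy : x ≠ y) :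
    ¬ IsHamBergePathFromTo
        (Finset.univ.powerset.filter (fun X => X.card = r ∧ (X ∩ A).card ≤ 1))
        n x y :=
  stmt_8_general n r A B hAB hA x y hx hy
end

section
/- For 3 <= r < n, let C'(n, r) be the r-uniform hypergraph obtained from the (n,r)-tight cycle by deleting one edge. Then C'(n, r) is hamiltonian-connected: for every pair of distinct vertices x and y, C'(n, r) contains a hamiltonian Berge path from x to y. -/
variable {α : Type*}

/-- Edge $e_i = \{v_i, v_{i+1}, \dots, v_{i+r-1}\}$ of the $(n,r)$-tight cycle,
with vertex set $\mathbb{Z}/n$. -/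
def tightEdge (n r : ℕ) (i : ℕ) : Finset (ZMod n) :=
  (Finset.range r).image (fun k => ((i + k : ℕ) : ZMod n))

/-- The edge set of the $(n,r)$-tight cycle. -/
def tightCycle (n r : ℕ) : Finset (Finset (ZMod n)) :=
  (Finset.range n).image (tightEdge n r)

/-! ### Auxiliary combinatorial functions -/

/-- The vertex sequence for the Hamiltonian Berge path: offsets from `x`.
`d` is the offset of the endpoint `y`. -/
def fseq (n d k : ℕ) : ℕ :=
  if k < d then k
  else if k = n - 1 then d
  else if d + 1 + 2 * (k - d) ≤ n - 1 then d + 1 + 2 * (k - d)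
  else 2 * n - 1 - (d + 1 + 2 * (k - d))

/-- The edge-index sequence (offsets from `x`); `m` is the offset of the deleted edge. -/
def eidx (n d m k : ℕ) : ℕ :=
  if k < d - 1 then
    (if m = n - 1 then k else if k = 0 then n - 1 else if k ≤ m then k - 1 else k)
  else min (fseq n d k) (fseq n d (k + 1))

/-- Closed-form of `eidx` on the suffix part. -/
def eidx2 (n d k : ℕ) : ℕ :=
  if k + 1 ≤ d then d - 1
  else if k = n - 2 then (if d + 3 ≤ n then d else n - 2)
  else if d + 1 + 2 * (k - d) ≤ n - 3 then d + 1 + 2 * (k - d)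
  else if d + 1 + 2 * (k - d) ≤ n - 1 then n - 2
  else 2 * n - 3 - (d + 1 + 2 * (k - d))

section Arith
variable {n d m k k' c : ℕ}

lemma fseq_lt (hn : 4 ≤ n) (hd1 : 1 ≤ d) (hd2 : d ≤ n - 1) (hk : k < n) :
    fseq n d k < n := by
  unfold fseq; split_ifs <;> omega

lemma fseq_inj (hn : 4 ≤ n) (hd1 : 1 ≤ d) (hd2 : d ≤ n - 1) (hk : k < n) (hk' : k' < n)
    (h : fseq n d k = fseq n d k') : k = k' := by
  unfold fseq at h; split_ifs at h <;> omega

lemma fseq_surj (hn : 4 ≤ n) (hd1 : 1 ≤ d) (hd2 : d ≤ n - 1) (hc : c < n) :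
    ∃ i < n, fseq n d i = c := by
  have himg : Finset.image (fseq n d) (Finset.range n) = Finset.range n := by
    apply Finset.eq_of_subset_of_card_le
    · intro a ha
      obtain ⟨i, hi, rfl⟩ := Finset.mem_image.1 ha
      exact Finset.mem_range.2 (fseq_lt hn hd1 hd2 (Finset.mem_range.1 hi))
    · rw [Finset.card_range,
        Finset.card_image_of_injOn (fun a ha b hb h =>
          fseq_inj hn hd1 hd2 (Finset.mem_range.1 ha) (Finset.mem_range.1 hb) h),
        Finset.card_range]
  have : c ∈ Finset.image (fseq n d) (Finset.range n) := by
    rw [himg]; exact Finset.mem_range.2 hc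
  obtain ⟨i, hi, hfi⟩ := Finset.mem_image.1 this
  exact ⟨i, Finset.mem_range.1 hi, hfi⟩

lemma fseq_zero (hd1 : 1 ≤ d) : fseq n d 0 = 0 := by
  unfold fseq; rw [if_pos (by omega)]

lemma fseq_last (hn : 4 ≤ n) (hd1 : 1 ≤ d) (hd2 : d ≤ n - 1) : fseq n d (n - 1) = d := by
  unfold fseq; split_ifs <;> omega

lemma eidx_lt (hn : 4 ≤ n) (hd1 : 1 ≤ d) (hd2 : d ≤ n - 1) (hk : k < n - 1) :
    eidx n d m k < n := by
  unfold eidx fseq; split_ifs <;> omega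

lemma eidx_ne (hn : 4 ≤ n) (hd1 : 1 ≤ d) (hd2 : d ≤ n - 1) (hm : m < n)
    (hsafe : m + 2 ≤ d ∨ m = n - 1) (hk : k < n - 1) : eidx n d m k ≠ m := by
  unfold eidx fseq; split_ifs <;> omega

set_option maxHeartbeats 1600000 in
lemma eidx_eq_suffix (hn : 4 ≤ n) (hd1 : 1 ≤ d) (hd2 : d ≤ n - 1)
    (h1 : d - 1 ≤ k) (h2 : k ≤ n - 2) : eidx n d m k = eidx2 n d k := by
  unfold eidx eidx2 fseq; split_ifs <;> omega

lemma eidx2_range (hn : 4 ≤ n) (hd1 : 1 ≤ d) (hd2 : d ≤ n - 1)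
    (h1 : d - 1 ≤ k) (h2 : k ≤ n - 2) :
    d - 1 ≤ eidx2 n d k ∧ eidx2 n d k ≤ n - 2 := by
  unfold eidx2; split_ifs <;> omega

lemma eidx2_inj (hn : 4 ≤ n) (hd1 : 1 ≤ d) (hd2 : d ≤ n - 1)
    (h1 : d - 1 ≤ k) (h2 : k ≤ n - 2) (h1' : d - 1 ≤ k') (h2' : k' ≤ n - 2)
    (h : eidx2 n d k = eidx2 n d k') : k = k' := by
  unfold eidx2 at h; split_ifs at h <;> omega

lemma eidx_inj (hn : 4 ≤ n) (hd1 : 1 ≤ d) (hd2 : d ≤ n - 1) (hm : m < n)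
    (hsafe : m + 2 ≤ d ∨ m = n - 1) (hk : k < n - 1) (hk' : k' < n - 1)
    (h : eidx n d m k = eidx n d m k') : k = k' := by
  rcases lt_or_ge k (d - 1) with h1 | h1 <;> rcases lt_or_ge k' (d - 1) with h2 | h2
  · unfold eidx at h; rw [if_pos h1, if_pos h2] at h; split_ifs at h <;> omega
  · rw [eidx_eq_suffix hn hd1 hd2 h2 (by omega)] at h
    have := eidx2_range hn hd1 hd2 h2 (show k' ≤ n - 2 by omega)
    unfold eidx at h; rw [if_pos h1] at h; split_ifs at h <;> omega
  · rw [eidx_eq_suffix hn hd1 hd2 h1 (by omega)] at h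
    have := eidx2_range hn hd1 hd2 h1 (show k ≤ n - 2 by omega)
    unfold eidx at h; rw [if_pos h2] at h; split_ifs at h <;> omega
  · rw [eidx_eq_suffix hn hd1 hd2 h1 (by omega),
      eidx_eq_suffix hn hd1 hd2 h2 (by omega)] at h
    exact eidx2_inj hn hd1 hd2 h1 (by omega) h2 (by omega) h

lemma eidx_pair (hn : 4 ≤ n) (hd1 : 1 ≤ d) (hd2 : d ≤ n - 1) (hm : m < n)
    (hsafe : m + 2 ≤ d ∨ m = n - 1) (hk : k < n - 1) :
    (eidx n d m k ≤ fseq n d k ∧ fseq n d k ≤ eidx n d m k + 2 ∨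
      eidx n d m k ≤ fseq n d k + n ∧ fseq n d k + n ≤ eidx n d m k + 2) ∧
    (eidx n d m k ≤ fseq n d (k + 1) ∧ fseq n d (k + 1) ≤ eidx n d m k + 2 ∨
      eidx n d m k ≤ fseq n d (k + 1) + n ∧ fseq n d (k + 1) + n ≤ eidx n d m k + 2) := by
  rcases lt_or_ge k (d - 1) with h1 | h1
  · have hf : fseq n d k = k := by unfold fseq; rw [if_pos (by omega)]
    have hf' : fseq n d (k + 1) = k + 1 := by unfold fseq; rw [if_pos (by omega)]
    rw [hf, hf']; unfold eidx; rw [if_pos h1]; split_ifs <;> omega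
  · rw [eidx_eq_suffix hn hd1 hd2 h1 (by omega)]
    unfold eidx2 fseq; split_ifs <;> omega

end Arith

/-! ### Facts about tight edges -/

lemma mem_tightEdge {n r i : ℕ} {c : ZMod n} :
    c ∈ tightEdge n r i ↔ ∃ k < r, ((i + k : ℕ) : ZMod n) = c := by
  simp [tightEdge]

lemma tightEdge_congr {n r : ℕ} {i i' : ℕ} (h : (i : ZMod n) = (i' : ZMod n)) :
    tightEdge n r i = tightEdge n r i' := by
  unfold tightEdge
  congr 1
  funext k
  push_cast
  rw [h]

lemma tightEdge_mem_cycle {n r : ℕ} (hn : 0 < n) (i : ℕ) :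
    tightEdge n r i ∈ tightCycle n r := by
  rw [tightEdge_congr (show ((i : ℕ) : ZMod n) = ((i % n : ℕ) : ZMod n) by
    conv_lhs => rw [← Nat.div_add_mod i n]
    push_cast
    simp [ZMod.natCast_self])]
  exact Finset.mem_image.2 ⟨i % n, Finset.mem_range.2 (Nat.mod_lt _ hn), rfl⟩

lemma natCast_inj_of_lt {n a b : ℕ} (ha : a < n) (hb : b < n)
    (h : (a : ZMod n) = (b : ZMod n)) : a = b := by
  have := congrArg ZMod.val h
  rwa [ZMod.val_cast_of_lt ha, ZMod.val_cast_of_lt hb] at this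

lemma tightEdge_inj {n r : ℕ} (hr : 0 < r) (hrn : r < n) {i i' : ℕ}
    (h : tightEdge n r i = tightEdge n r i') : (i : ZMod n) = (i' : ZMod n) := by
  haveI : NeZero n := ⟨by omega⟩
  have h0 : ((i' + 0 : ℕ) : ZMod n) ∈ tightEdge n r i := by
    rw [h]; exact mem_tightEdge.2 ⟨0, hr, rfl⟩
  obtain ⟨k, hk, hki⟩ := mem_tightEdge.1 h0
  rcases Nat.eq_zero_or_pos k with rfl | hkpos
  · simpa using hki
  · exfalso
    have hmem : ((i' + (n - 1) : ℕ) : ZMod n) ∈ tightEdge n r i' := by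
      have heq : ((i' + (n - 1) : ℕ) : ZMod n) = ((i + (k - 1) : ℕ) : ZMod n) := by
        push_cast [Nat.cast_sub (show 1 ≤ n by omega),
          Nat.cast_sub (show 1 ≤ k by omega)] at hki ⊢
        rw [ZMod.natCast_self]
        linear_combination -hki
      rw [heq, ← h]
      exact mem_tightEdge.2 ⟨k - 1, by omega, rfl⟩
    obtain ⟨t, ht, hti⟩ := mem_tightEdge.1 hmem
    have : (t : ZMod n) = ((n - 1 : ℕ) : ZMod n) := by
      push_cast at hti ⊢
      linear_combination hti
    have := natCast_inj_of_lt (by omega) (by omega) this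
    omega

/-! ### Reversal of Hamiltonian Berge paths -/

lemma IsHamBergePathFromTo.reverse {H : Finset (Finset α)} {n : ℕ} (hn : 2 ≤ n) {x y : α}
    (h : IsHamBergePathFromTo H n y x) : IsHamBergePathFromTo H n x y := by
  obtain ⟨v, e, ⟨hv, he, heH, hp⟩, h0, h1, hs⟩ := h
  refine ⟨fun i => v (n - 1 - i), fun i => e (n - 2 - i), ⟨?_, ?_, ?_, ?_⟩, ?_, ?_, ?_⟩
  · intro i i' hi hi' hh
    have := hv _ _ (show n - 1 - i < n by omega) (show n - 1 - i' < n by omega) hh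
    omega
  · intro i i' hi hi' hh
    have := he _ _ (show n - 2 - i < n - 1 by omega) (show n - 2 - i' < n - 1 by omega) hh
    omega
  · intro i hi
    exact heH _ (by omega)
  · intro i hi
    obtain ⟨ha, hb⟩ := hp (n - 2 - i) (by omega)
    rw [show n - 2 - i + 1 = n - 1 - i by omega] at hb
    refine ⟨hb, ?_⟩
    show v (n - 1 - (i + 1)) ∈ e (n - 2 - i)
    rw [show n - 1 - (i + 1) = n - 2 - i by omega]
    exact ha
  · simpa using h1
  · simpa using h0
  · intro z
    obtain ⟨i, hi, hvi⟩ := hs z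
    refine ⟨n - 1 - i, by omega, ?_⟩
    show v (n - 1 - (n - 1 - i)) = z
    rw [show n - 1 - (n - 1 - i) = i by omega]
    exact hvi

/-! ### The main construction -/

lemma forward (n r : ℕ) (hr : 3 ≤ r) (hrn : r < n)
    (j : ℕ) (x y : ZMod n) (hxy : x ≠ y)
    (hsafe : ((j : ZMod n) - x).val + 2 ≤ (y - x).val ∨ ((j : ZMod n) - x).val = n - 1) :
    IsHamBergePathFromTo ((tightCycle n r).erase (tightEdge n r j)) n x y := by
  haveI : NeZero n := ⟨by omega⟩
  set d := (y - x).val with hdd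
  set m := ((j : ZMod n) - x).val with hmm'
  have hcv : ∀ a : ZMod n, ((a.val : ℕ) : ZMod n) = a := fun a => ZMod.natCast_rightInverse a
  have hn : 4 ≤ n := by omega
  have hd1 : 1 ≤ d := by
    rcases Nat.eq_zero_or_pos d with h0 | h0
    · exact absurd (sub_eq_zero.1 ((ZMod.val_eq_zero _).1 h0)).symm hxy
    · exact h0
  have hd2 : d ≤ n - 1 := by have := ZMod.val_lt (y - x); omega
  have hm : m < n := ZMod.val_lt _
  have hmemp : ∀ (E F : ℕ), (E ≤ F ∧ F ≤ E + 2 ∨ E ≤ F + n ∧ F + n ≤ E + 2) →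
      (x + (F : ZMod n)) ∈ tightEdge n r (x.val + E) := by
    rintro E F (⟨hle, hle2⟩ | ⟨hle, hle2⟩)
    · refine mem_tightEdge.2 ⟨F - E, by omega, ?_⟩
      push_cast [Nat.cast_sub hle, hcv x]
      ring
    · refine mem_tightEdge.2 ⟨F + n - E, by omega, ?_⟩
      push_cast [Nat.cast_sub hle, ZMod.natCast_self, hcv x]
      ring
  refine ⟨fun i => x + ((fseq n d i : ℕ) : ZMod n),
    fun i => tightEdge n r (x.val + eidx n d m i), ⟨?_, ?_, ?_, ?_⟩, ?_, ?_, ?_⟩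
  · intro i i' hi hi' hh
    have := add_left_cancel hh
    exact fseq_inj hn hd1 hd2 hi hi'
      (natCast_inj_of_lt (fseq_lt hn hd1 hd2 hi) (fseq_lt hn hd1 hd2 hi') this)
  · intro i i' hi hi' hh
    have h2 := tightEdge_inj (by omega) hrn hh
    push_cast at h2
    have h3 := add_left_cancel h2
    exact eidx_inj hn hd1 hd2 hm hsafe hi hi'
      (natCast_inj_of_lt (eidx_lt hn hd1 hd2 hi) (eidx_lt hn hd1 hd2 hi') h3)
  · intro i hi
    refine Finset.mem_erase.2 ⟨?_, tightEdge_mem_cycle (by omega) _⟩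
    intro heq
    have h2 := tightEdge_inj (by omega) hrn heq
    push_cast [hcv x] at h2
    have h3 : ((eidx n d m i : ℕ) : ZMod n) = ((m : ℕ) : ZMod n) := by
      rw [hmm', hcv ((j : ZMod n) - x)]
      linear_combination h2
    exact eidx_ne hn hd1 hd2 hm hsafe hi
      (natCast_inj_of_lt (eidx_lt hn hd1 hd2 hi) hm h3)
  · intro i hi
    obtain ⟨hp1, hp2⟩ := eidx_pair hn hd1 hd2 hm hsafe hi
    exact ⟨hmemp _ _ hp1, hmemp _ _ hp2⟩
  · show x + ((fseq n d 0 : ℕ) : ZMod n) = x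
    rw [fseq_zero hd1]
    simp
  · show x + ((fseq n d (n - 1) : ℕ) : ZMod n) = y
    have hdy : ((d : ℕ) : ZMod n) = y - x := hcv (y - x)
    rw [fseq_last hn hd1 hd2, hdy]
    ring
  · intro z
    obtain ⟨i, hi, hfi⟩ := fseq_surj hn hd1 hd2 (show (z - x).val < n from ZMod.val_lt _)
    refine ⟨i, hi, ?_⟩
    show x + ((fseq n d i : ℕ) : ZMod n) = z
    rw [hfi, hcv (z - x)]
    ring

/-- $C'(n,r)$, the tight cycle minus one edge, is hamiltonian-connected. -/
theorem stmt_10 (n r : ℕ) (hr : 3 ≤ r) (hrn : r < n)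
    (j : ℕ) (hj : j < n) (x y : ZMod n) (hxy : x ≠ y) :
    IsHamBergePathFromTo ((tightCycle n r).erase (tightEdge n r j)) n x y := by
  haveI : NeZero n := ⟨by omega⟩
  have hcv : ∀ a : ZMod n, ((a.val : ℕ) : ZMod n) = a := fun a => ZMod.natCast_rightInverse a
  set d := (y - x).val with hdd
  set m := ((j : ZMod n) - x).val with hmm'
  have hd1 : 1 ≤ d := by
    rcases Nat.eq_zero_or_pos d with h0 | h0
    · exact absurd (sub_eq_zero.1 ((ZMod.val_eq_zero _).1 h0)).symm hxy
    · exact h0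
  have hd2 : d ≤ n - 1 := by have := ZMod.val_lt (y - x); omega
  have hm : m < n := ZMod.val_lt _
  by_cases hs : m + 2 ≤ d ∨ m = n - 1
  · exact forward n r hr hrn j x y hxy hs
  · push_neg at hs
    obtain ⟨hs1, hs2⟩ := hs
    apply IsHamBergePathFromTo.reverse (by omega)
    apply forward n r hr hrn j y x hxy.symm
    have hdy : ((d : ℕ) : ZMod n) = y - x := hcv (y - x)
    have hmx : ((m : ℕ) : ZMod n) = (j : ZMod n) - x := hcv ((j : ZMod n) - x)
    have hxyv : (x - y).val = n - d := by
      have h1 : x - y = ((n - d : ℕ) : ZMod n) := by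
        push_cast [Nat.cast_sub (show d ≤ n by omega)]
        rw [ZMod.natCast_self, hdy]
        ring
      rw [h1, ZMod.val_cast_of_lt (by omega)]
    rcases Nat.lt_or_ge m d with hcase | hcase
    · -- m = d - 1 : the deleted edge sits just before y; use the n-1 branch.
      right
      have h1 : (j : ZMod n) - y = ((n - 1 : ℕ) : ZMod n) := by
        push_cast [Nat.cast_sub (show 1 ≤ n by omega)]
        rw [ZMod.natCast_self]
        have hmd : m + 1 = d := by omega
        have h2 : ((m : ℕ) : ZMod n) + 1 = ((d : ℕ) : ZMod n) := by
          rw [← hmd]; push_cast; ring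
        rw [hmx, hdy] at h2
        linear_combination h2
      rw [h1, ZMod.val_cast_of_lt (by omega)]
    · left
      have h1 : (j : ZMod n) - y = ((m - d : ℕ) : ZMod n) := by
        push_cast [Nat.cast_sub hcase]
        rw [hmx, hdy]
        ring
      rw [h1, ZMod.val_cast_of_lt (by omega), hxyv]
      omega
end

section
/- Let (Q, P) be a pair of vertex-disjoint Berge paths in a hypergraph H, with Q = v_1, e_1, ..., e_{s-1}, v_s an x,y-path and P = u_1, f_1, ..., f_{l-1}, u_l, chosen so that |E(Q)| is maximum, then |E(P)| is maximum. For i in {1, l}, let B_i = { e_j in E(Q) : u_i is in e_j }. Then for every e_i in B_1 and e_j in B_l, either i = j or |i - j| >= l. -/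
variable {α : Type*}

lemma splice_aux (H : Finset (Finset α)) (s ℓ : ℕ) (v u : ℕ → α) (e f : ℕ → Finset α)
    (hs : 2 ≤ s) (hl : 1 ≤ ℓ)
    (hQ : IsBergePath H s v e) (hP : IsBergePath H ℓ u f)
    (hvdisj : ∀ a < s, ∀ b < ℓ, v a ≠ u b)
    (hedisj : ∀ a, a < s - 1 → ∀ b, b < ℓ - 1 → e a ≠ f b)
    (i d : ℕ) (hd : 1 ≤ d) (hj : i + d < s - 1)
    (hu0 : u 0 ∈ e i) (hul : u (ℓ - 1) ∈ e (i + d)) :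
    ∃ v' e', IsBergePath H (s + ℓ - d) v' e' ∧ v' 0 = v 0 ∧
      v' (s + ℓ - d - 1) = v (s - 1) := by
  obtain ⟨hQv, hQe, hQH, hQc⟩ := hQ
  obtain ⟨hPv, hPe, hPH, hPc⟩ := hP
  set v' : ℕ → α := fun k =>
    if k ≤ i then v k else if k ≤ i + ℓ then u (k - i - 1) else v (k + d - ℓ) with hv'
  set e' : ℕ → Finset α := fun k =>
    if k ≤ i then e k else if k < i + ℓ then f (k - i - 1) else e (k + d - ℓ) with he'
  have hv_head : ∀ k, k ≤ i → v' k = v k := by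
    intro k h; simp only [hv']; rw [if_pos h]
  have hv_mid : ∀ k, i < k → k ≤ i + ℓ → v' k = u (k - i - 1) := by
    intro k h1 h2; simp only [hv']; rw [if_neg (by omega), if_pos h2]
  have hv_tail : ∀ k, i + ℓ < k → v' k = v (k + d - ℓ) := by
    intro k h1; simp only [hv']; rw [if_neg (by omega), if_neg (by omega)]
  have he_head : ∀ k, k ≤ i → e' k = e k := by
    intro k h; simp only [he']; rw [if_pos h]
  have he_mid : ∀ k, i < k → k < i + ℓ → e' k = f (k - i - 1) := by
    intro k h1 h2; simp only [he']; rw [if_neg (by omega), if_pos h2]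
  have he_tail : ∀ k, i + ℓ ≤ k → e' k = e (k + d - ℓ) := by
    intro k h1; simp only [he']; rw [if_neg (by omega), if_neg (by omega)]
  refine ⟨v', e', ⟨?_, ?_, ?_, ?_⟩, hv_head 0 (by omega), ?_⟩
  · -- vertex injectivity
    have key : ∀ k₁ k₂, k₁ < s + ℓ - d → k₂ < s + ℓ - d → k₁ ≤ k₂ →
        v' k₁ = v' k₂ → k₁ = k₂ := by
      intro k₁ k₂ h₁ h₂ hle heq
      by_cases a1 : k₁ ≤ i
      · by_cases b1 : k₂ ≤ i
        · rw [hv_head _ a1, hv_head _ b1] at heq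
          exact hQv _ _ (by omega) (by omega) heq
        · by_cases b2 : k₂ ≤ i + ℓ
          · rw [hv_head _ a1, hv_mid _ (by omega) b2] at heq
            exact absurd heq (hvdisj _ (by omega) _ (by omega))
          · rw [hv_head _ a1, hv_tail _ (by omega)] at heq
            have := hQv _ _ (by omega) (by omega) heq; omega
      · by_cases a2 : k₁ ≤ i + ℓ
        · by_cases b2 : k₂ ≤ i + ℓ
          · rw [hv_mid _ (by omega) a2, hv_mid _ (by omega) b2] at heq
            have := hPv _ _ (by omega) (by omega) heq; omega
          · rw [hv_mid _ (by omega) a2, hv_tail _ (by omega)] at heq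
            exact absurd heq.symm (hvdisj _ (by omega) _ (by omega))
        · rw [hv_tail _ (by omega), hv_tail _ (by omega)] at heq
          have := hQv _ _ (by omega) (by omega) heq; omega
    intro k₁ k₂ h₁ h₂ heq
    rcases le_total k₁ k₂ with h | h
    · exact key _ _ h₁ h₂ h heq
    · exact (key _ _ h₂ h₁ h heq.symm).symm
  · -- edge injectivity
    have key : ∀ k₁ k₂, k₁ < s + ℓ - d - 1 → k₂ < s + ℓ - d - 1 → k₁ ≤ k₂ →
        e' k₁ = e' k₂ → k₁ = k₂ := by
      intro k₁ k₂ h₁ h₂ hle heq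
      by_cases a1 : k₁ ≤ i
      · by_cases b1 : k₂ ≤ i
        · rw [he_head _ a1, he_head _ b1] at heq
          exact hQe _ _ (by omega) (by omega) heq
        · by_cases b2 : k₂ < i + ℓ
          · rw [he_head _ a1, he_mid _ (by omega) b2] at heq
            exact absurd heq (hedisj _ (by omega) _ (by omega))
          · rw [he_head _ a1, he_tail _ (by omega)] at heq
            have := hQe _ _ (by omega) (by omega) heq; omega
      · by_cases a2 : k₁ < i + ℓ
        · by_cases b2 : k₂ < i + ℓ
          · rw [he_mid _ (by omega) a2, he_mid _ (by omega) b2] at heq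
            have := hPe _ _ (by omega) (by omega) heq; omega
          · rw [he_mid _ (by omega) a2, he_tail _ (by omega)] at heq
            exact absurd heq.symm (hedisj _ (by omega) _ (by omega))
        · rw [he_tail _ (by omega), he_tail _ (by omega)] at heq
          have := hQe _ _ (by omega) (by omega) heq; omega
    intro k₁ k₂ h₁ h₂ heq
    rcases le_total k₁ k₂ with h | h
    · exact key _ _ h₁ h₂ h heq
    · exact (key _ _ h₂ h₁ h heq.symm).symm
  · -- edges in H
    intro k hk
    by_cases a1 : k ≤ i
    · rw [he_head _ a1]; exact hQH _ (by omega)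
    · by_cases a2 : k < i + ℓ
      · rw [he_mid _ (by omega) a2]; exact hPH _ (by omega)
      · rw [he_tail _ (by omega)]; exact hQH _ (by omega)
  · -- containment
    intro k hk
    by_cases a1 : k < i
    · rw [he_head _ (by omega), hv_head _ (by omega), hv_head _ (by omega)]
      exact hQc k (by omega)
    · by_cases a2 : k = i
      · subst a2
        rw [he_head _ le_rfl, hv_head _ le_rfl, hv_mid _ (by omega) (by omega)]
        refine ⟨(hQc k (by omega)).1, ?_⟩
        rw [show k + 1 - k - 1 = 0 from by omega]; exact hu0
      · by_cases a3 : k < i + ℓ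
        · rw [he_mid _ (by omega) a3, hv_mid _ (by omega) (by omega),
            hv_mid _ (by omega) (by omega)]
          have h := hPc (k - i - 1) (by omega)
          refine ⟨h.1, ?_⟩
          rw [show k + 1 - i - 1 = k - i - 1 + 1 from by omega]; exact h.2
        · by_cases a4 : k = i + ℓ
          · subst a4
            rw [he_tail _ le_rfl, hv_mid _ (by omega) le_rfl, hv_tail _ (by omega)]
            rw [show i + ℓ - i - 1 = ℓ - 1 from by omega,
              show i + ℓ + d - ℓ = i + d from by omega,
              show i + ℓ + 1 + d - ℓ = i + d + 1 from by omega]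
            exact ⟨hul, (hQc (i + d) (by omega)).2⟩
          · rw [he_tail _ (by omega), hv_tail _ (by omega), hv_tail _ (by omega)]
            rw [show k + 1 + d - ℓ = k + d - ℓ + 1 from by omega]
            exact hQc (k + d - ℓ) (by omega)
  · rw [hv_tail _ (by omega), show s + ℓ - d - 1 + d - ℓ = s - 1 from by omega]

/-- For a best pair $(Q, P)$ of vertex-disjoint Berge paths ($Q$ an $x,y$-path
of maximum length, $P$ of maximum length among paths vertex-disjoint from $Q$),
if $u_1 \in e_i$ and $u_\ell \in e_j$ for edges $e_i, e_j$ of $Q$, then $i = j$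
or $|i - j| \ge \ell$. -/
theorem stmt_16 (H : Finset (Finset α)) (x y : α)
    (s ℓ : ℕ) (v u : ℕ → α) (e f : ℕ → Finset α)
    (hs : 2 ≤ s) (hl : 1 ≤ ℓ)
    (hQ : IsBergePath H s v e) (hQx : v 0 = x) (hQy : v (s - 1) = y)
    (hP : IsBergePath H ℓ u f)
    (hvdisj : ∀ i < s, ∀ j < ℓ, v i ≠ u j)
    (hedisj : ∀ i, i < s - 1 → ∀ j, j < ℓ - 1 → e i ≠ f j)
    (hQmax : ∀ (s' : ℕ) (v' : ℕ → α) (e' : ℕ → Finset α),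
      IsBergePath H s' v' e' → v' 0 = x → v' (s' - 1) = y → s' ≤ s)
    (hPmax : ∀ (ℓ' : ℕ) (u' : ℕ → α) (f' : ℕ → Finset α),
      IsBergePath H ℓ' u' f' → (∀ i < ℓ', ∀ j < s, u' i ≠ v j) → ℓ' ≤ ℓ) :
    ∀ i j, i < s - 1 → j < s - 1 → u 0 ∈ e i → u (ℓ - 1) ∈ e j →
      i = j ∨ ℓ ≤ Nat.dist i j := by
  intro i j hi hj hu0 hul
  by_contra hcon
  push_neg at hcon
  obtain ⟨hne, hdist⟩ := hcon
  rcases lt_or_gt_of_ne hne with hij | hij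
  · obtain ⟨v', e', hBP, h0, hlast⟩ := splice_aux H s ℓ v u e f hs hl hQ hP hvdisj hedisj
      i (j - i) (by omega) (by omega) hu0 (by rw [show i + (j - i) = j from by omega]; exact hul)
    have hle := hQmax _ v' e' hBP (by rw [h0, hQx]) (by rw [hlast, hQy])
    rw [Nat.dist_eq_sub_of_le (by omega)] at hdist
    omega
  · have hP' : IsBergePath H ℓ (fun k => u (ℓ - 1 - k)) (fun k => f (ℓ - 2 - k)) := by
      obtain ⟨hPv, hPe, hPH, hPc⟩ := hP
      refine ⟨?_, ?_, ?_, ?_⟩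
      · intro a b ha hb h
        have := hPv _ _ (by omega) (by omega) h; omega
      · intro a b ha hb h
        have := hPe _ _ (by omega) (by omega) h; omega
      · intro a ha; exact hPH _ (by omega)
      · intro a ha
        have h := hPc (ℓ - 2 - a) (by omega)
        constructor
        · show u (ℓ - 1 - a) ∈ f (ℓ - 2 - a)
          rw [show ℓ - 1 - a = ℓ - 2 - a + 1 from by omega]; exact h.2
        · show u (ℓ - 1 - (a + 1)) ∈ f (ℓ - 2 - a)
          rw [show ℓ - 1 - (a + 1) = ℓ - 2 - a from by omega]; exact h.1
    obtain ⟨v', e', hBP, h0, hlast⟩ := splice_aux H s ℓ v (fun k => u (ℓ - 1 - k)) e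
      (fun k => f (ℓ - 2 - k)) hs hl hQ hP'
      (fun a ha b hb => hvdisj a ha _ (by omega))
      (fun a ha b hb => hedisj a ha _ (by omega))
      j (i - j) (by omega) (by omega)
      (by simpa using hul)
      (by
        show u (ℓ - 1 - (ℓ - 1)) ∈ e (j + (i - j))
        rw [show ℓ - 1 - (ℓ - 1) = 0 from by omega, show j + (i - j) = i from by omega]
        exact hu0)
    have hle := hQmax _ v' e' hBP (by rw [h0, hQx]) (by rw [hlast, hQy])
    rw [Nat.dist_comm, Nat.dist_eq_sub_of_le (by omega)] at hdist
    omega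
end

section
/- Let (Q, P) be a best pair in a hypergraph H where Q = v_1, e_1, ..., e_{s-1}, v_s is an x,y-Berge path of maximum length. Let u be a vertex not on Q with u in e_i, and suppose some edge e of H not in E(Q) contains both u and v_i (or both u and v_{i+1}). Then H contains an x,y-Berge path longer than Q, contradicting maximality. Hence for any u not in V(Q) with u in e_i, there is no edge outside E(Q) containing u together with v_i or v_{i+1}. -/
variable {α : Type*}

/-- If $Q$ is an $x,y$-Berge path of maximum length, $u \notin V(Q)$ and
$u \in e_i$, then no edge of $H$ outside $E(Q)$ contains $u$ together with
$v_i$ or $v_{i+1}$. -/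
theorem stmt_17 (H : Finset (Finset α)) (x y : α)
    (s : ℕ) (v : ℕ → α) (e : ℕ → Finset α) (hs : 2 ≤ s)
    (hQ : IsBergePath H s v e) (hQx : v 0 = x) (hQy : v (s - 1) = y)
    (hQmax : ∀ (s' : ℕ) (v' : ℕ → α) (e' : ℕ → Finset α),
      IsBergePath H s' v' e' → v' 0 = x → v' (s' - 1) = y → s' ≤ s)
    (u : α) (hu : ∀ k < s, v k ≠ u)
    (i : ℕ) (hi : i < s - 1) (hui : u ∈ e i) :
    ¬ ∃ g ∈ H, (∀ k, k < s - 1 → g ≠ e k) ∧ u ∈ g ∧ (v i ∈ g ∨ v (i + 1) ∈ g) := by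
  rintro ⟨g, hgH, hgne, hug, hvg⟩
  obtain ⟨vinj, einj, eH, einc⟩ := hQ
  have key : ∀ a b : Finset α, a ∈ H → b ∈ H → a ≠ b →
      (∀ k, k < s - 1 → k ≠ i → a ≠ e k ∧ b ≠ e k) →
      v i ∈ a → u ∈ a → u ∈ b → v (i + 1) ∈ b → False := by
    intro a b haH hbH hab hane hva hua hub hvb
    set v' : ℕ → α := fun k => if k ≤ i then v k else if k = i + 1 then u else v (k - 1)
      with hv'
    set e' : ℕ → Finset α :=
      fun k => if k < i then e k else if k = i then a else if k = i + 1 then b else e (k - 1)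
      with he'
    have hpath : IsBergePath H (s + 1) v' e' := by
      refine ⟨?_, ?_, ?_, ?_⟩
      · intro j j' hj hj' hvv
        simp only [hv'] at hvv
        split_ifs at hvv
        all_goals first
          | omega
          | exact absurd hvv (hu _ (by omega))
          | exact absurd hvv.symm (hu _ (by omega))
          | (have := vinj _ _ (by omega) (by omega) hvv; omega)
      · intro j j' hj hj' hvv
        simp only [he'] at hvv
        split_ifs at hvv
        all_goals first
          | omega
          | exact absurd hvv hab
          | exact absurd hvv.symm hab
          | exact absurd hvv.symm ((hane _ (by omega) (by omega)).1)
          | exact absurd hvv ((hane _ (by omega) (by omega)).1)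
          | exact absurd hvv.symm ((hane _ (by omega) (by omega)).2)
          | exact absurd hvv ((hane _ (by omega) (by omega)).2)
          | (have := einj _ _ (by omega) (by omega) hvv; omega)
      · intro k hk
        simp only [he']
        split_ifs
        all_goals first
          | exact haH
          | exact hbH
          | exact eH _ (by omega)
      · intro k hk
        rcases lt_trichotomy k i with h | h | h
        · have h1 : v' k = v k := by
            simp only [hv']; rw [if_pos (by omega)]
          have h2 : v' (k + 1) = v (k + 1) := by
            simp only [hv']; rw [if_pos (by omega)]
          have h3 : e' k = e k := by
            simp only [he']; rw [if_pos h]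
          rw [h1, h2, h3]
          exact einc k (by omega)
        · subst h
          have h1 : v' k = v k := by
            simp only [hv']; rw [if_pos le_rfl]
          have h2 : v' (k + 1) = u := by
            simp only [hv']; rw [if_neg (by omega)]; simp
          have h3 : e' k = a := by
            simp only [he']; rw [if_neg (by omega)]; simp
          rw [h1, h2, h3]
          exact ⟨hva, hua⟩
        · by_cases h' : k = i + 1
          · subst h'
            have h1 : v' (i + 1) = u := by
              simp only [hv']; rw [if_neg (by omega)]; simp
            have h2 : v' (i + 1 + 1) = v (i + 1) := by
              simp only [hv']; rw [if_neg (by omega), if_neg (by omega)]; simp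
            have h3 : e' (i + 1) = b := by
              simp only [he']; rw [if_neg (by omega), if_neg (by omega)]; simp
            rw [h1, h2, h3]
            exact ⟨hub, hvb⟩
          · have h1 : v' k = v (k - 1) := by
              simp only [hv']; rw [if_neg (by omega), if_neg (by omega)]
            have h2 : v' (k + 1) = v k := by
              simp only [hv']
              rw [if_neg (by omega), if_neg (by omega)]
              simp
            have h3 : e' k = e (k - 1) := by
              simp only [he']
              rw [if_neg (by omega), if_neg (by omega), if_neg (by omega)]
            obtain ⟨p1, p2⟩ := einc (k - 1) (by omega)
            have hk1 : k - 1 + 1 = k := by omega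
            rw [hk1] at p2
            rw [h1, h2, h3]
            exact ⟨p1, p2⟩
    have hx : v' 0 = x := by
      simp only [hv']; rw [if_pos (Nat.zero_le i)]; exact hQx
    have hy : v' (s + 1 - 1) = y := by
      have : v' s = v (s - 1) := by
        simp only [hv']; rw [if_neg (by omega), if_neg (by omega)]
      simpa [this] using hQy
    have := hQmax (s + 1) v' e' hpath hx hy
    omega
  rcases hvg with hvg | hvg
  · exact key g (e i) hgH (eH i hi) (hgne i hi)
      (fun k hk hki => ⟨hgne k hk, fun h => hki (einj i k hi hk h).symm⟩)
      hvg hug hui (einc i hi).2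
  · exact key (e i) g (eH i hi) hgH (fun h => hgne i hi h.symm)
      (fun k hk hki => ⟨fun h => hki (einj i k hi hk h).symm, hgne k hk⟩)
      (einc i hi).1 hui hug hvg
end

section
/- Let Q = v_1, e_1, ..., e_{s-1}, v_s be a Berge x,y-path of maximum length in a hypergraph H and let u be a vertex not on Q. Let B = {e_j in E(Q) : u in e_j} with b = |B|, and suppose e is an edge of H not in E(Q) and not containing u. If for every v_i, v_j in e ∩ V(Q) at most one of e_i, e_j lies in B and at most one of e_{i-1}, e_{j-1} lies in B, then b <= s - |e ∩ V(Q)| + 1. -/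
variable {α : Type*}

/-- Counting bound: if $Q$ is a Berge path, $u \notin V(Q)$, $B$ is the set of
edges of $Q$ containing $u$ and $g$ is an edge of $H$ outside $E(Q)$ not
containing $u$, such that for all distinct $v_i, v_j \in g \cap V(Q)$ at most one
of $e_i, e_j$ is in $B$ and at most one of $e_{i-1}, e_{j-1}$ is in $B$, then
$|B| \le s - |g \cap V(Q)| + 1$. -/
theorem stmt_19 [DecidableEq α] (H : Finset (Finset α))
    (s : ℕ) (v : ℕ → α) (e : ℕ → Finset α) (hs : 2 ≤ s)
    (hQ : IsBergePath H s v e)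
    (u : α) (hu : ∀ k < s, v k ≠ u)
    (g : Finset α) (hg : g ∈ H) (hgQ : ∀ k, k < s - 1 → g ≠ e k) (hug : u ∉ g)
    (hcond : ∀ i j, i < s → j < s → i ≠ j → v i ∈ g → v j ∈ g →
      ¬ (i < s - 1 ∧ j < s - 1 ∧ u ∈ e i ∧ u ∈ e j) ∧
      ¬ (1 ≤ i ∧ 1 ≤ j ∧ u ∈ e (i - 1) ∧ u ∈ e (j - 1))) :
    ((Finset.range (s - 1)).filter (fun k => u ∈ e k)).card ≤
      s - ((Finset.range s).filter (fun k => v k ∈ g)).card + 1 := by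
  classical
  set B := (Finset.range (s - 1)).filter (fun k => u ∈ e k) with hB
  set A := (Finset.range s).filter (fun k => v k ∈ g) with hA
  set A' := (Finset.range (s - 1)).filter (fun k => v k ∈ g) with hA'
  have hAA' : A.card ≤ A'.card + 1 := by
    have hsub : A ⊆ insert (s - 1) A' := by
      intro i hi
      simp only [hA, Finset.mem_filter, Finset.mem_range] at hi
      rcases lt_or_ge i (s - 1) with h | h
      · exact Finset.mem_insert_of_mem (by simp [hA', h, hi.2])
      · have : i = s - 1 := by omega
        simp [this]
    calc A.card ≤ (insert (s - 1) A').card := Finset.card_le_card hsub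
      _ ≤ A'.card + 1 := Finset.card_insert_le _ _
  have hcap : (B ∩ A').card ≤ 1 := by
    apply Finset.card_le_one.mpr
    intro i hi j hj
    simp only [hB, hA', Finset.mem_inter, Finset.mem_filter, Finset.mem_range] at hi hj
    by_contra hij
    exact (hcond i j (by omega) (by omega) hij hi.2.2 hj.2.2).1
      ⟨hi.1.1, hj.1.1, hi.1.2, hj.1.2⟩
  have hunion : (B ∪ A').card ≤ s - 1 := by
    have : B ∪ A' ⊆ Finset.range (s - 1) := by
      simp only [hB, hA', Finset.union_subset_iff]
      exact ⟨Finset.filter_subset _ _, Finset.filter_subset _ _⟩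
    simpa using Finset.card_le_card this
  have hkey : B.card + A'.card ≤ s := by
    have := Finset.card_union_add_card_inter B A'
    omega
  have hAcard : A.card ≤ s := by
    have : A ⊆ Finset.range s := Finset.filter_subset _ _
    simpa using Finset.card_le_card this
  omega
end
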